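/- arXiv:0805.2038 — 8 statements merged into one kernel-verified Lean document; each statement's English description precedes it below -/
import Mathlib

section
/- Let X be a Polish space and ≤ an F_σ quasi-order on X (i.e., ≤ is reflexive, transitive, and an F_σ subset of X²). If (X,≤) contains a strictly increasing ω₁-chain (x_ξ)_{ξ<ω₁} (meaning x_ξ ≤ x_ζ and x_ζ ≰ x_ξ whenever ξ < ζ), then there exists a perfect subset P of X such that any two distinct elements of P are incomparable with respect to ≤. -/
/-!
Call an open set large if the chain `x` visits it uncountably often before `ω₁`. Given large `U`,
`V` and a closed `C ⊆ ≤`, take a condensation index `ζ` of the chain in `V`, then a condensation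
index `ξ > ζ` in `U` (the large set `U` is visited at uncountably, hence unboundedly many indices).
Since `x ξ ≰ x ζ`, the point `(x ξ, x ζ)` lies off `C`, so small neighbourhoods of `x ξ` and
`x ζ` give large `U' ⊆ U`, `V' ⊆ V` with `U' × V'` disjoint from `C`. Writing `≤` as `⋃ n, F n`,
a Mycielski-type Cantor scheme of large sets whose ordered pairs at level `n + 1` are all separated
in this way from `diagonal ∪ F 0 ∪ ⋯ ∪ F n` induces a continuous injection of the Cantor space
whose range is a perfect antichain.
-/

open Set Function Topology Filter Metric Cardinal CantorScheme PiNat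
open scoped ENNReal

theorem Ordinal.countable_Iic_of_lt_ord_aleph_one {ζ : Ordinal} (hζ : ζ < (aleph 1).ord) :
    (Iic ζ).Countable := by
  have hsucc : Order.succ ζ < (aleph 1).ord :=
    (isSuccLimit_ord (aleph0_le_aleph 1)).succ_lt hζ
  rw [← Order.Iio_succ, ← le_aleph0_iff_set_countable, Cardinal.mk_Iio_ordinal, lift_le_aleph0,
    ← lt_aleph_one_iff, ← lt_ord]
  exact hsucc

theorem Ordinal.exists_mem_gt_of_not_countable {A : Set Ordinal} (hA : ¬A.Countable)
    {ζ : Ordinal} (hζ : ζ < (aleph 1).ord) : ∃ ξ ∈ A, ζ < ξ := by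
  by_contra! h
  exact hA ((countable_Iic_of_lt_ord_aleph_one hζ).mono h)

theorem Ordinal.not_countable_Iio_ord_aleph_one : ¬(Iio (aleph 1).ord).Countable := by
  rw [← le_aleph0_iff_set_countable, Cardinal.mk_Iio_ordinal, lift_le_aleph0, card_ord,
    ← lt_aleph_one_iff]
  exact lt_irrefl _

instance {β : Type*} [TopologicalSpace β] [Nontrivial β] : PerfectSpace (ℕ → β) := by
  refine perfectSpace_iff_forall_not_isolated.2 fun σ => ?_
  rw [← mem_closure_iff_nhdsWithin_neBot]
  choose b hb using fun n => exists_ne (σ n)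
  refine mem_closure_of_tendsto (b := atTop) (f := fun n => update σ n (b n)) ?_
    (Eventually.of_forall fun n h => hb n (by simpa using congrFun h n))
  refine tendsto_pi_nhds.2 fun i => tendsto_nhds_of_eventually_eq ?_
  filter_upwards [eventually_gt_atTop i] with n hn
  exact update_of_ne hn.ne _ _

theorem perfect_range_of_injective {α β : Type*} [TopologicalSpace α] [CompactSpace α]
    [PerfectSpace α] [TopologicalSpace β] [T2Space β] {f : α → β} (hf : Continuous f)
    (hinj : Injective f) : Perfect (range f) := by
  refine ⟨(isCompact_range hf).isClosed, preperfect_iff_nhds.2 ?_⟩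
  rintro _ ⟨a, rfl⟩ U hU
  obtain ⟨b, ⟨hbU, -⟩, hba⟩ :=
    preperfect_iff_nhds.1 PerfectSpace.univ_preperfect a (mem_univ a) _ (hf.continuousAt hU)
  exact ⟨f b, ⟨hbU, mem_range_self b⟩, hinj.ne hba⟩

theorem countable_setOf_mem_not_condensation {ι X : Type*} [TopologicalSpace X]
    [SecondCountableTopology X] (f : ι → X) (A : Set ι) :
    {a ∈ A | ∃ U, IsOpen U ∧ f a ∈ U ∧ (A ∩ f ⁻¹' U).Countable}.Countable := by
  obtain ⟨b, hbc, -, hb⟩ := TopologicalSpace.exists_countable_basis X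
  refine ((hbc.mono (sep_subset b fun u => (A ∩ f ⁻¹' u).Countable)).biUnion
    fun u hu => hu.2).mono ?_
  rintro a ⟨ha, U, hU, haU, hcount⟩
  obtain ⟨u, hub, hau, huU⟩ := hb.exists_subset_of_mem_open haU hU
  exact mem_biUnion ⟨hub, hcount.mono (inter_subset_inter_right A (preimage_mono huU))⟩ ⟨ha, hau⟩

theorem exists_pairwise_refinement {α ι : Type*} [Finite ι] {good : Set α → Prop}
    {Sep : Set α → Set α → Prop}
    (hSep : ∀ ⦃U V U' V'⦄, U' ⊆ U → V' ⊆ V → Sep U V → Sep U' V')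
    (hsplit : ∀ U V, good U → good V → ∃ U' ⊆ U, ∃ V' ⊆ V, good U' ∧ good V' ∧ Sep U' V')
    (E : ι → Set α) (hE : ∀ i, good (E i)) :
    ∃ E' : ι → Set α, (∀ i, E' i ⊆ E i) ∧ (∀ i, good (E' i)) ∧
      ∀ i j, i ≠ j → Sep (E' i) (E' j) := by
  classical
  have : Fintype ι := Fintype.ofFinite ι
  suffices key : ∀ (L : List (ι × ι)) (E : ι → Set α), (∀ i, good (E i)) →
      ∃ E' : ι → Set α, (∀ i, E' i ⊆ E i) ∧ (∀ i, good (E' i)) ∧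
        ∀ p ∈ L, p.1 ≠ p.2 → Sep (E' p.1) (E' p.2) by
    obtain ⟨E', hsub, hgood, hsep⟩ := key Finset.univ.toList E hE
    exact ⟨E', hsub, hgood, fun i j hij => hsep (i, j) (by simp) hij⟩
  intro L
  induction L with
  | nil => exact fun E hE => ⟨E, fun _ => subset_rfl, hE, by simp⟩
  | cons q L ih =>
    intro E hE
    by_cases hq : q.1 = q.2
    · obtain ⟨E', hsub, hgood, hsep⟩ := ih E hE
      exact ⟨E', hsub, hgood, List.forall_mem_cons.2 ⟨fun hne => absurd hq hne, hsep⟩⟩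
    obtain ⟨U, hU, V, hV, hgU, hgV, hUV⟩ := hsplit _ _ (hE q.1) (hE q.2)
    let E₁ : ι → Set α := fun i => if i = q.1 then U else if i = q.2 then V else E i
    have hE₁ : ∀ i, E₁ i ⊆ E i ∧ good (E₁ i) := by
      intro i
      simp only [E₁]
      split_ifs with h₁ h₂
      exacts [⟨h₁ ▸ hU, hgU⟩, ⟨h₂ ▸ hV, hgV⟩, ⟨subset_rfl, hE i⟩]
    obtain ⟨E', hsub, hgood, hsep⟩ := ih E₁ fun i => (hE₁ i).2
    refine ⟨E', fun i => (hsub i).trans (hE₁ i).1, hgood,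
      List.forall_mem_cons.2 ⟨fun _ => hSep (hsub q.1) (hsub q.2) ?_, hsep⟩⟩
    simpa [E₁, Ne.symm hq] using hUV

section Scheme

variable {X : Type*} [PseudoMetricSpace X] {good : Set X → Prop}

theorem exists_separated_shrinking {ι κ : Type*} [Finite κ] {C : Set (X × X)}
    (hshrink : ∀ U, good U → ∀ ε : ℝ≥0∞, 0 < ε → ∃ U', good U' ∧ closure U' ⊆ U ∧ ediam U' ≤ ε)
    (hsplit : ∀ U V, good U → good V →
      ∃ U' ⊆ U, ∃ V' ⊆ V, good U' ∧ good V' ∧ Disjoint (U' ×ˢ V') C)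
    (D : ι → Set X) (hD : ∀ i, good (D i)) (parent : κ → ι) {ε : ℝ≥0∞} (hε : 0 < ε) :
    ∃ E : κ → Set X, (∀ k, good (E k)) ∧ (∀ k, closure (E k) ⊆ D (parent k)) ∧
      (∀ k, ediam (E k) ≤ ε) ∧ ∀ k l, k ≠ l → Disjoint (E k ×ˢ E l) C := by
  choose E₀ hgood₀ hcl₀ hdiam₀ using fun k => hshrink _ (hD (parent k)) ε hε
  obtain ⟨E, hsub, hgood, hsep⟩ := exists_pairwise_refinement
    (fun _ _ _ _ hU hV h => h.mono_left (prod_mono hU hV)) hsplit E₀ hgood₀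
  exact ⟨E, hgood, fun k => (closure_mono (hsub k)).trans (hcl₀ k),
    fun k => (ediam_mono (hsub k)).trans (hdiam₀ k), hsep⟩

theorem exists_separated_cantorScheme {C : ℕ → Set (X × X)} (hroot : ∃ U, good U)
    (hshrink : ∀ U, good U → ∀ ε : ℝ≥0∞, 0 < ε → ∃ U', good U' ∧ closure U' ⊆ U ∧ ediam U' ≤ ε)
    (hsplit : ∀ n U V, good U → good V →
      ∃ U' ⊆ U, ∃ V' ⊆ V, good U' ∧ good V' ∧ Disjoint (U' ×ˢ V') (C n)) :
    ∃ A : List Bool → Set X, ClosureAntitone A ∧ (∀ l, good (A l)) ∧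
      (∀ l, ediam (A l) ≤ (l.length : ℝ≥0∞)⁻¹) ∧
      ∀ l m, l.length = m.length → l ≠ m → Disjoint (A l ×ˢ A m) (C l.length) := by
  obtain ⟨U₀, hU₀⟩ := hroot
  choose next hgood hcl hdiam hsep using
    fun n (D : {D : List.Vector Bool n → Set X // ∀ v, good (D v)}) =>
    exists_separated_shrinking hshrink (hsplit (n + 1)) D.1 D.2
      (fun v : List.Vector Bool (n + 1) => v.tail)
      (ε := ((n + 1 : ℕ) : ℝ≥0∞)⁻¹) (by simp)
  let T : ∀ n, {D : List.Vector Bool n → Set X // ∀ v, good (D v)} := fun n =>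
    Nat.rec ⟨fun _ => U₀, fun _ => hU₀⟩ (fun n D => ⟨next n D, hgood n D⟩) n
  let A : List Bool → Set X := fun l => (T l.length).1 ⟨l, rfl⟩
  have hA : ∀ n (v : List.Vector Bool n), A v.1 = (T n).1 v := by
    rintro n ⟨l, rfl⟩
    rfl
  refine ⟨A, fun l a => hcl l.length (T l.length) ⟨a :: l, rfl⟩, fun l => (T l.length).2 _,
    ?_, ?_⟩
  · rintro (_ | ⟨a, l⟩)
    · simp -- `((0 : ℕ) : ℝ≥0∞)⁻¹ = ⊤` leaves the root unconstrained
    · exact hdiam l.length (T l.length) ⟨a :: l, rfl⟩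
  · intro l m hlm hne
    have hsepT : ∀ n (v w : List.Vector Bool n), v ≠ w →
        Disjoint ((T n).1 v ×ˢ (T n).1 w) (C n) := by
      rintro (_ | n) v w hvw
      · exact absurd (List.Vector.ext (Fin.elim0 ·)) hvw
      · exact hsep n (T n) v w hvw
    rw [hA l.length ⟨l, rfl⟩, hA l.length ⟨m, hlm.symm⟩]
    exact hsepT _ _ _ fun h => hne (congrArg Subtype.val h)

end Scheme

theorem exists_perfect_antichain_of_forall_split {X : Type*} [MetricSpace X] [CompleteSpace X]
    {r : X → X → Prop} (hrefl : ∀ a, r a a) {F : ℕ → Set (X × X)} (hF : ∀ n, IsClosed (F n))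
    (hr : {p : X × X | r p.1 p.2} = ⋃ n, F n) {good : Set X → Prop}
    (hne : ∀ U, good U → U.Nonempty) (hroot : ∃ U, good U)
    (hshrink : ∀ U, good U → ∀ ε : ℝ≥0∞, 0 < ε → ∃ U', good U' ∧ closure U' ⊆ U ∧ ediam U' ≤ ε)
    (hsplit : ∀ C, IsClosed C → C ⊆ {p : X × X | r p.1 p.2} → ∀ U V, good U → good V →
      ∃ U' ⊆ U, ∃ V' ⊆ V, good U' ∧ good V' ∧ Disjoint (U' ×ˢ V') C) :
    ∃ P : Set X, Perfect P ∧ P.Nonempty ∧ ∀ a ∈ P, ∀ b ∈ P, a ≠ b → ¬r a b := by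
  let G : ℕ → Set (X × X) := fun n => diagonal X ∪ accumulate F n
  have hG : ∀ n, IsClosed (G n) := fun n => isClosed_diagonal.union <|
    (finite_le_nat n).isClosed_biUnion fun i _ => hF i
  have hGr : ∀ n, G n ⊆ {p | r p.1 p.2} := by
    rintro n p (hp | hp)
    · exact (mem_diagonal_iff.1 hp).subst (motive := fun b => r p.1 b) (hrefl p.1)
    · exact hr ▸ accumulate_subset_iUnion n hp
  obtain ⟨A, hanti, hgood, hdiam, hsep⟩ :=
    exists_separated_cantorScheme hroot hshrink fun n => hsplit _ (hG n) (hGr n)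
  have hvanish : VanishingDiam A := fun σ =>
    tendsto_of_tendsto_of_tendsto_of_le_of_le tendsto_const_nhds
      ENNReal.tendsto_inv_nat_nhds_zero (fun _ => bot_le)
      fun n => (hdiam _).trans_eq (by rw [res_length])
  have hdom : ∀ σ, σ ∈ (inducedMap A).1 := by
    rw [hanti.map_of_vanishingDiam hvanish fun l => hne _ (hgood l)]
    exact mem_univ
  let g : (ℕ → Bool) → X := fun σ => (inducedMap A).2 ⟨σ, hdom σ⟩
  have hg : ∀ σ τ, σ ≠ τ → ¬r (g σ) (g τ) := by
    intro σ τ hστ hgr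
    obtain ⟨k, hk⟩ := ne_iff.1 hστ
    obtain ⟨i, hi⟩ := mem_iUnion.1 (hr ▸ hgr : (g σ, g τ) ∈ ⋃ n, F n)
    have hres : res σ (max i k + 1) ≠ res τ (max i k + 1) :=
      fun h => hk (res_eq_res.1 h (by omega))
    have hmem : (g σ, g τ) ∈ A (res σ (max i k + 1)) ×ˢ A (res τ (max i k + 1)) :=
      ⟨map_mem ⟨σ, hdom σ⟩ _, map_mem ⟨τ, hdom τ⟩ _⟩
    refine (hsep _ _ (by simp [res_length]) hres).notMem_of_mem_left hmem (Or.inr ?_)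
    rw [res_length]
    exact mem_accumulate.2 ⟨i, by omega, hi⟩
  have hinj : Injective g := fun σ τ h => by_contra fun hστ => hg σ τ hστ (h ▸ hrefl _)
  refine ⟨range g, perfect_range_of_injective ?_ hinj, range_nonempty g, ?_⟩
  · exact hvanish.map_continuous.comp (continuous_id.subtype_mk hdom)
  · rintro _ ⟨σ, rfl⟩ _ ⟨τ, rfl⟩ hne
    exact hg σ τ (fun h => hne (h ▸ rfl))

section OmegaOneChain

variable {X : Type*}

def IsOmegaOneLarge [TopologicalSpace X] (x : Ordinal → X) (U : Set X) : Prop :=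
  IsOpen U ∧ ¬(Iio (aleph 1).ord ∩ x ⁻¹' U).Countable

variable {x : Ordinal → X}

theorem isOmegaOneLarge_univ [TopologicalSpace X] : IsOmegaOneLarge x univ := by
  simpa [IsOmegaOneLarge] using Ordinal.not_countable_Iio_ord_aleph_one

theorem IsOmegaOneLarge.nonempty [TopologicalSpace X] {U : Set X} (hU : IsOmegaOneLarge x U) :
    U.Nonempty :=
  let ⟨ξ, _, hξ⟩ : (Iio (aleph 1).ord ∩ x ⁻¹' U).Nonempty :=
    by_contra fun h => hU.2 (countable_empty.mono (not_nonempty_iff_eq_empty.1 h).subset)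
  ⟨x ξ, hξ⟩

theorem IsOmegaOneLarge.exists_condensation_gt [TopologicalSpace X] [SecondCountableTopology X]
    {U : Set X} (hU : IsOmegaOneLarge x U) {ζ : Ordinal} (hζ : ζ < (aleph 1).ord) :
    ∃ ξ, ζ < ξ ∧ ξ < (aleph 1).ord ∧ x ξ ∈ U ∧
      ∀ W, IsOpen W → x ξ ∈ W → IsOmegaOneLarge x W := by
  set A := Iio (aleph 1).ord ∩ x ⁻¹' U
  set B := {ξ ∈ A | ∃ W, IsOpen W ∧ x ξ ∈ W ∧ (A ∩ x ⁻¹' W).Countable}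
  have hB : B.Countable := countable_setOf_mem_not_condensation x A
  have hAB : ¬(A \ B).Countable := fun h => hU.2 <| (h.union hB).mono fun ξ hξ => by
    by_cases hξB : ξ ∈ B
    exacts [Or.inr hξB, Or.inl ⟨hξ, hξB⟩]
  obtain ⟨ξ, ⟨⟨hξω, hξU⟩, hξB⟩, hζξ⟩ := Ordinal.exists_mem_gt_of_not_countable hAB hζ
  refine ⟨ξ, hζξ, hξω, hξU, fun W hW hξW => ⟨hW, fun hcount => ?_⟩⟩
  exact hξB ⟨⟨hξω, hξU⟩, W, hW, hξW, hcount.mono (inter_subset_inter_left _ inter_subset_left)⟩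

theorem IsOmegaOneLarge.exists_closure_subset_ediam_le [PseudoMetricSpace X]
    [SecondCountableTopology X] {U : Set X} (hU : IsOmegaOneLarge x U) {ε : ℝ≥0∞}
    (hε : 0 < ε) : ∃ U', IsOmegaOneLarge x U' ∧ closure U' ⊆ U ∧ ediam U' ≤ ε := by
  obtain ⟨ξ, -, -, hξU, hξ⟩ := hU.exists_condensation_gt (ord_pos.2 (aleph_pos 1))
  obtain ⟨δ, hδ, hδU⟩ := Metric.isOpen_iff.1 hU.1 _ hξU
  obtain ⟨r, -, hr, hrε⟩ := ENNReal.lt_iff_exists_real_btwn.1 hε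
  have hr : 0 < r := ENNReal.ofReal_pos.1 hr
  set s := min (δ / 2) (r / 2)
  have hs : 0 < s := by positivity
  refine ⟨ball (x ξ) s, hξ _ isOpen_ball (mem_ball_self hs),
    closure_ball_subset_closedBall.trans ((closedBall_subset_ball ?_).trans hδU), ?_⟩
  · exact (min_le_left _ _).trans_lt (half_lt_self hδ)
  refine (ediam_le_of_forall_dist_le fun a ha b hb => ?_).trans hrε.le
  have := dist_triangle_right a b (x ξ)
  have := min_le_right (δ / 2) (r / 2)
  linarith [mem_ball.1 ha, mem_ball.1 hb]

theorem IsOmegaOneLarge.exists_prod_disjoint [TopologicalSpace X] [SecondCountableTopology X]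
    {le : X → X → Prop}
    (hchain : ∀ ξ ζ : Ordinal, ξ < ζ → ζ < (aleph 1).ord → ¬le (x ζ) (x ξ))
    {C : Set (X × X)} (hC : IsClosed C) (hCle : C ⊆ {p | le p.1 p.2}) {U V : Set X}
    (hU : IsOmegaOneLarge x U) (hV : IsOmegaOneLarge x V) :
    ∃ U' ⊆ U, ∃ V' ⊆ V, IsOmegaOneLarge x U' ∧ IsOmegaOneLarge x V' ∧
      Disjoint (U' ×ˢ V') C := by
  obtain ⟨ζ, -, hζω, hζV, hζ⟩ := hV.exists_condensation_gt (ord_pos.2 (aleph_pos 1))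
  obtain ⟨ξ, hζξ, hξω, hξU, hξ⟩ := hU.exists_condensation_gt hζω
  have hnotC : (x ξ, x ζ) ∉ C := fun h => hchain ζ ξ hζξ hξω (hCle h)
  obtain ⟨U₀, V₀, hU₀, hV₀, hξU₀, hζV₀, hsub⟩ :=
    isOpen_prod_iff.1 hC.isOpen_compl _ _ hnotC
  exact ⟨U ∩ U₀, inter_subset_left, V ∩ V₀, inter_subset_left,
    hξ _ (hU.1.inter hU₀) ⟨hξU, hξU₀⟩, hζ _ (hV.1.inter hV₀) ⟨hζV, hζV₀⟩,
    subset_compl_iff_disjoint_right.1 <|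
      (prod_mono inter_subset_right inter_subset_right).trans hsub⟩

end OmegaOneChain

theorem fsigma_quasiorder_omega1_chain_perfect_antichain_general
    {X : Type*} [TopologicalSpace X] [PolishSpace X]
    (le : X → X → Prop)
    (hrefl : ∀ x, le x x)
    (hFσ : ∃ F : ℕ → Set (X × X), (∀ n, IsClosed (F n)) ∧
      {p : X × X | le p.1 p.2} = ⋃ n, F n)
    (x : Ordinal → X)
    (hchain : ∀ ξ ζ : Ordinal, ξ < ζ → ζ < (Cardinal.aleph 1).ord →
      le (x ξ) (x ζ) ∧ ¬ le (x ζ) (x ξ)) :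
    ∃ P : Set X, Perfect P ∧ P.Nonempty ∧
      ∀ a ∈ P, ∀ b ∈ P, a ≠ b → ¬ le a b ∧ ¬ le b a := by
  let := TopologicalSpace.upgradeIsCompletelyMetrizable X
  obtain ⟨F, hF, hle⟩ := hFσ
  obtain ⟨P, hP, hPne, hanti⟩ := exists_perfect_antichain_of_forall_split hrefl hF hle
    (good := IsOmegaOneLarge x) (fun _ hU => hU.nonempty) ⟨univ, isOmegaOneLarge_univ⟩
    (fun _ hU _ hε => hU.exists_closure_subset_ediam_le hε)
    (fun _ hC hCle _ _ hU hV =>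
      hU.exists_prod_disjoint (fun ξ ζ hξζ hζ => (hchain ξ ζ hξζ hζ).2) hC hCle hV)
  exact ⟨P, hP, hPne, fun a ha b hb hab => ⟨hanti a ha b hb hab, hanti b hb a ha hab.symm⟩⟩

/-- If an F_σ quasi-order on a Polish space contains a strictly increasing
ω₁-chain, then there is a perfect set of pairwise incomparable elements. -/
theorem fsigma_quasiorder_omega1_chain_perfect_antichain
    {X : Type*} [TopologicalSpace X] [PolishSpace X]
    (le : X → X → Prop)
    (hrefl : ∀ x, le x x)
    (htrans : ∀ x y z, le x y → le y z → le x z)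
    (hFσ : ∃ F : ℕ → Set (X × X), (∀ n, IsClosed (F n)) ∧
      {p : X × X | le p.1 p.2} = ⋃ n, F n)
    (x : Ordinal → X)
    (hchain : ∀ ξ ζ : Ordinal, ξ < ζ → ζ < (Cardinal.aleph 1).ord →
      le (x ξ) (x ζ) ∧ ¬ le (x ζ) (x ξ)) :
    ∃ P : Set X, Perfect P ∧ P.Nonempty ∧
      ∀ a ∈ P, ∀ b ∈ P, a ≠ b → ¬ le a b ∧ ¬ le b a :=
  fsigma_quasiorder_omega1_chain_perfect_antichain_general le hrefl hFσ x hchain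
end

section
/- Let X be a Polish space and ≤ an F_σ thin quasi-order on X, where thin means X contains no perfect set of pairwise incomparable elements. Then (X,≤) contains no ω₁-chain, i.e., there is no sequence (x_ξ)_{ξ<ω₁} that is strictly increasing (x_ξ < x_ζ for ξ < ζ) or strictly decreasing with respect to ≤. -/
/-!
Let `A` be the range of an `ω₁`-chain, say increasing; every element of `A` has only countably
many predecessors in `A`. Let `K` consist of the points of `A` each of whose neighbourhoods meets
`A` uncountably; all but countably many points of `A` lie in `K`. So if `U`, `V` are open and meet
`K`, then for any `c ∈ V ∩ K` some `a ∈ U ∩ K` satisfies `a ≰ c`: no closed piece `F n` of `≤`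
contains `(U ∩ K) × (V ∩ K)`. A Cantor scheme of open sets meeting `K`, whose distinct nodes of
level `m` are separated by `F 0, …, F (m - 1)` (as in Mycielski's theorem), then yields a Cantor
set of pairwise incomparable points.
-/

open Set Filter Topology Function

instance : PerfectSpace (ℕ → Bool) := by
  refine ⟨preperfect_iff_nhds.2 fun x _ U hU => ?_⟩
  obtain ⟨_, ⟨y, n, rfl⟩, hxy, hyU⟩ :=
    (PiNat.isTopologicalBasis_cylinders (E := fun _ => Bool)).mem_nhds_iff.1 hU
  rw [← PiNat.mem_cylinder_iff_eq.1 hxy] at hyU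
  refine ⟨update x n (!x n), ⟨hyU (PiNat.update_mem_cylinder x n _), mem_univ _⟩, fun h => ?_⟩
  simpa using congrFun h n

theorem Continuous.perfect_range {α X : Type*} [TopologicalSpace α] [CompactSpace α]
    [PerfectSpace α] [TopologicalSpace X] [T2Space X] {f : α → X} (hf : Continuous f)
    (hinj : Injective f) : Perfect (range f) := by
  refine ⟨(isCompact_range hf).isClosed, preperfect_iff_nhds.2 ?_⟩
  rintro _ ⟨x, rfl⟩ U hU
  obtain ⟨y, hy, hyx⟩ :=
    preperfect_iff_nhds.1 PerfectSpace.univ_preperfect x (mem_univ x) _ (hf.continuousAt hU)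
  exact ⟨f y, ⟨hy.1, mem_range_self y⟩, hinj.ne hyx⟩

section Topological

variable {X : Type*} [TopologicalSpace X] {K : Set X} {F : ℕ → Set (X × X)}

def openMeeting (K : Set X) : Set (Set X) := {U | IsOpen U ∧ (U ∩ K).Nonempty}

/-- Relative to `K ×ˢ K`, every `F n` has empty interior. -/
def NoOpenBoxIn (K : Set X) (F : ℕ → Set (X × X)) : Prop :=
  ∀ n, ∀ U ∈ openMeeting K, ∀ V ∈ openMeeting K, ¬ (U ∩ K) ×ˢ (V ∩ K) ⊆ F n

theorem NoOpenBoxIn.exists_prod_disjoint (hsep : NoOpenBoxIn K F) {n : ℕ}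
    (hF : IsClosed (F n)) {U V : Set X} (hU : U ∈ openMeeting K) (hV : V ∈ openMeeting K) :
    ∃ U' ∈ openMeeting K, ∃ V' ∈ openMeeting K, U' ⊆ U ∧ V' ⊆ V ∧ Disjoint (U' ×ˢ V') (F n) := by
  obtain ⟨⟨a, c⟩, ⟨⟨haU, haK⟩, hcV, hcK⟩, hac⟩ := not_subset.1 (hsep n U hU V hV)
  obtain ⟨u, v, hu, hv, hau, hcv, huv⟩ := isOpen_prod_iff.1 hF.isOpen_compl a c hac
  refine ⟨U ∩ u, ⟨hU.1.inter hu, a, ⟨haU, hau⟩, haK⟩, V ∩ v, ⟨hV.1.inter hv, c, ⟨hcV, hcv⟩, hcK⟩,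
    inter_subset_left, inter_subset_left, ?_⟩
  exact subset_compl_iff_disjoint_right.1
    ((prod_mono inter_subset_right inter_subset_right).trans huv)

theorem NoOpenBoxIn.exists_refinement_prod_disjoint (hsep : NoOpenBoxIn K F)
    (hFc : ∀ n, IsClosed (F n)) {ι : Type*} (Q : Finset ((ι × ι) × ℕ))
    (hQ : ∀ q ∈ Q, q.1.1 ≠ q.1.2) (g : ι → Set X) (hg : ∀ i, g i ∈ openMeeting K) :
    ∃ g' : ι → Set X, (∀ i, g' i ∈ openMeeting K) ∧ (∀ i, g' i ⊆ g i) ∧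
      ∀ q ∈ Q, Disjoint (g' q.1.1 ×ˢ g' q.1.2) (F q.2) := by
  classical
  induction Q using Finset.induction_on with
  | empty => exact ⟨g, hg, fun i => subset_rfl, by simp⟩
  | @insert q Q _ ih =>
    obtain ⟨⟨i, j⟩, n⟩ := q
    have hij : i ≠ j := hQ _ (Finset.mem_insert_self _ _)
    obtain ⟨g₁, hg₁, hg₁g, hg₁Q⟩ := ih fun q hq => hQ q (Finset.mem_insert_of_mem hq)
    obtain ⟨U, hU, V, hV, hUi, hVj, hUV⟩ := hsep.exists_prod_disjoint (hFc n) (hg₁ i) (hg₁ j)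
    set g₂ := update (update g₁ i U) j V
    have hg₂ : ∀ k, g₂ k ∈ openMeeting K ∧ g₂ k ⊆ g₁ k := by
      intro k
      simp only [g₂, update_apply]
      split_ifs with hkj hki
      exacts [⟨hV, hkj ▸ hVj⟩, ⟨hU, hki ▸ hUi⟩, ⟨hg₁ k, subset_rfl⟩]
    refine ⟨g₂, fun k => (hg₂ k).1, fun k => (hg₂ k).2.trans (hg₁g k), ?_⟩
    rintro ⟨⟨k, l⟩, m⟩ hq
    rcases Finset.mem_insert.1 hq with hq | hq
    · simp only [Prod.mk.injEq] at hq
      obtain ⟨⟨rfl, rfl⟩, rfl⟩ := hq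
      simpa [g₂, hij] using hUV
    · exact (hg₁Q _ hq).mono (prod_mono (hg₂ k).2 (hg₂ l).2) le_rfl

end Topological

section PseudoMetric

variable {X : Type*} [PseudoMetricSpace X] {K : Set X} {F : ℕ → Set (X × X)}

theorem exists_openMeeting_closure_subset_ediam_le {U : Set X} (hU : U ∈ openMeeting K)
    {ε : ℝ} (hε : 0 < ε) :
    ∃ W ∈ openMeeting K, closure W ⊆ U ∧ Metric.ediam W ≤ ENNReal.ofReal ε := by
  obtain ⟨hUo, y, hyU, hyK⟩ := hU
  obtain ⟨δ, hδ, hδU⟩ := Metric.isOpen_iff.1 hUo y hyU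
  set r := min (δ / 2) (ε / 2)
  have hr : 0 < r := by positivity
  refine ⟨Metric.ball y r, ⟨Metric.isOpen_ball, y, Metric.mem_ball_self hr, hyK⟩, ?_, ?_⟩
  · exact Metric.closure_ball_subset_closedBall.trans
      ((Metric.closedBall_subset_ball (by grind)).trans hδU)
  · refine Metric.ediam_le_of_forall_dist_le fun a ha b hb => ?_
    have := dist_triangle_right a b y
    rw [Metric.mem_ball] at ha hb
    grind

-- Lists grow at the head (see `PiNat.res`), so the parent of `l` is `l.tail`.
theorem NoOpenBoxIn.exists_next_level (hsep : NoOpenBoxIn K F) (hFc : ∀ n, IsClosed (F n))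
    (g : List Bool → Set X) (hg : ∀ l, g l ∈ openMeeting K) (m : ℕ) :
    ∃ g' : List Bool → Set X, (∀ l, g' l ∈ openMeeting K) ∧ (∀ l, closure (g' l) ⊆ g l.tail) ∧
      (∀ l, Metric.ediam (g' l) ≤ ENNReal.ofReal ((1 / 2) ^ m)) ∧
      ∀ l l', l.length = m → l'.length = m → l ≠ l' → ∀ n < m, Disjoint (g' l ×ˢ g' l') (F n) := by
  set S := (List.finite_length_eq Bool m).toFinset
  obtain ⟨g₁, hg₁, hg₁g, hg₁Q⟩ := hsep.exists_refinement_prod_disjoint hFc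
    (S.offDiag ×ˢ Finset.range m)
    (fun q hq => (Finset.mem_offDiag.1 (Finset.mem_product.1 hq).1).2.2)
    (fun l => g l.tail) (fun l => hg l.tail)
  choose g' hg' hg'g₁ hg'diam using fun l =>
    exists_openMeeting_closure_subset_ediam_le (hg₁ l) (by positivity : (0 : ℝ) < (1 / 2) ^ m)
  refine ⟨g', hg', fun l => (hg'g₁ l).trans (hg₁g l), hg'diam, ?_⟩
  intro l l' hl hl' hne n hn
  exact (hg₁Q ((l, l'), n) (by simp [S, hl, hl', hne, hn])).mono
    (prod_mono (subset_closure.trans (hg'g₁ l)) (subset_closure.trans (hg'g₁ l'))) le_rfl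

theorem NoOpenBoxIn.exists_cantorScheme (hsep : NoOpenBoxIn K F) (hFc : ∀ n, IsClosed (F n))
    (hK : K.Nonempty) :
    ∃ A : List Bool → Set X, (∀ l, A l ∈ openMeeting K) ∧ CantorScheme.ClosureAntitone A ∧
      CantorScheme.VanishingDiam A ∧
      ∀ l l', l.length = l'.length → l ≠ l' → ∀ n < l.length, Disjoint (A l ×ˢ A l') (F n) := by
  let Level := {g : List Bool → Set X // ∀ l, g l ∈ openMeeting K}
  choose next hnext hnext_sub hnext_diam hnext_disj using
    fun (g : Level) m => hsep.exists_next_level hFc g.1 g.2 m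
  -- `G m` is only read on lists of length `m`.
  let G : ℕ → Level := fun m => Nat.rec ⟨next ⟨fun _ => univ, fun _ => ⟨isOpen_univ, by simpa⟩⟩ 0,
    hnext _ 0⟩ (fun m g => ⟨next g (m + 1), hnext g (m + 1)⟩) m
  have hG : ∀ m, ∃ g, (G m).1 = next g m := by
    rintro (_ | m)
    exacts [⟨_, rfl⟩, ⟨G m, rfl⟩]
  refine ⟨fun l => (G l.length).1 l, fun l => (G l.length).2 l, fun l a => hnext_sub _ _ _, ?_, ?_⟩
  · intro x
    refine tendsto_of_tendsto_of_tendsto_of_le_of_le tendsto_const_nhds (g := fun _ => 0)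
      (h := fun n => ENNReal.ofReal ((1 / 2) ^ n)) ?_ (fun _ => bot_le) fun n => ?_
    · simpa using ENNReal.tendsto_ofReal (tendsto_pow_atTop_nhds_zero_of_lt_one
        (by norm_num : (0 : ℝ) ≤ 1 / 2) (by norm_num))
    · obtain ⟨g, hg⟩ := hG n
      simp only [PiNat.res_length, hg]
      exact hnext_diam g n _
  · intro l l' hll' hne n hn
    obtain ⟨g, hg⟩ := hG l.length
    dsimp only
    rw [← hll', hg]
    exact hnext_disj g _ l l' rfl hll'.symm hne n hn

end PseudoMetric

theorem NoOpenBoxIn.exists_perfect_pairwise_notMem_iUnion {X : Type*} [MetricSpace X]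
    [CompleteSpace X] {K : Set X} {F : ℕ → Set (X × X)} (hsep : NoOpenBoxIn K F)
    (hFc : ∀ n, IsClosed (F n)) (hK : K.Nonempty) (hdiag : ∀ x, (x, x) ∈ ⋃ n, F n) :
    ∃ P : Set X, Perfect P ∧ P.Nonempty ∧ P.Pairwise fun a b => (a, b) ∉ ⋃ n, F n := by
  obtain ⟨A, hA, hanti, hdiam, hdisj⟩ := hsep.exists_cantorScheme hFc hK
  have hdom := hanti.map_of_vanishingDiam hdiam fun l => (hA l).2.mono inter_subset_left
  let f : (ℕ → Bool) → X := fun x => (CantorScheme.inducedMap A).2 ⟨x, hdom ▸ mem_univ x⟩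
  have hf : Continuous f := hdiam.map_continuous.comp (by fun_prop)
  have hfF : ∀ x y, x ≠ y → (f x, f y) ∉ ⋃ n, F n := by
    intro x y hxy hmem
    obtain ⟨n, hn⟩ := mem_iUnion.1 hmem
    obtain ⟨k, hk⟩ := ne_iff.1 hxy
    have hres : PiNat.res x (max n k + 1) ≠ PiNat.res y (max n k + 1) :=
      fun h => hk (PiNat.res_eq_res.1 h (by omega))
    exact disjoint_left.1 (hdisj _ _ (by simp [PiNat.res_length]) hres n
      (by simp [PiNat.res_length]))
      (mk_mem_prod (CantorScheme.map_mem _ _) (CantorScheme.map_mem _ _)) hn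
  have hinj : Injective f := fun x y hxy => by_contra fun hne => hfF x y hne (hxy ▸ hdiag (f x))
  refine ⟨range f, hf.perfect_range hinj, range_nonempty f, ?_⟩
  rintro _ ⟨x, rfl⟩ _ ⟨y, rfl⟩ hne
  exact hfF x y (ne_of_apply_ne f hne)

theorem countable_setOf_mem_exists_nhds_countable {X : Type*} [TopologicalSpace X]
    [SecondCountableTopology X] (A : Set X) :
    {x ∈ A | ∃ U ∈ 𝓝 x, (U ∩ A).Countable}.Countable := by
  set S := {x ∈ A | ∃ U ∈ 𝓝 x, (U ∩ A).Countable}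
  choose! U hU hUA using fun x (hx : x ∈ S) => hx.2
  obtain ⟨t, htS, htc, hSt⟩ := TopologicalSpace.countable_cover_nhdsWithin
    (f := fun x => U x ∩ A) fun x hx => inter_mem (mem_nhdsWithin_of_mem_nhds (hU x hx))
      (mem_of_superset self_mem_nhdsWithin fun y hy => hy.1)
  exact (htc.biUnion fun x hx => hUA x (htS hx)).mono hSt

theorem exists_perfect_pairwise_not_rel_of_countable_predecessors {X : Type*}
    [TopologicalSpace X] [PolishSpace X] {r : X → X → Prop} (hrefl : ∀ x, r x x)
    (hr : ∃ F : ℕ → Set (X × X), (∀ n, IsClosed (F n)) ∧ {p : X × X | r p.1 p.2} = ⋃ n, F n)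
    {A : Set X} (hA : ¬ A.Countable) (hpred : ∀ c ∈ A, {a ∈ A | r a c}.Countable) :
    ∃ P : Set X, Perfect P ∧ P.Nonempty ∧ P.Pairwise fun a b => ¬ r a b := by
  let := TopologicalSpace.upgradeIsCompletelyMetrizable X
  obtain ⟨F, hFc, hF⟩ := hr
  have hrF : ∀ a b, r a b ↔ (a, b) ∈ ⋃ n, F n := fun a b => by rw [← hF]; rfl
  set K := {x ∈ A | ∀ U ∈ 𝓝 x, ¬ (U ∩ A).Countable}
  have hAK : (A \ K).Countable := by
    refine (countable_setOf_mem_exists_nhds_countable A).mono ?_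
    rintro x ⟨hxA, hxK⟩
    exact ⟨hxA, by simpa [K, hxA] using hxK⟩
  have hKne : K.Nonempty := by
    by_contra hK
    exact hA (by simpa [not_nonempty_iff_eq_empty.1 hK] using hAK)
  have hKU : ∀ U ∈ openMeeting K, ¬ (U ∩ K).Countable := by
    rintro U ⟨hUo, y, hyU, -, hyK⟩ hUK
    refine hyK U (hUo.mem_nhds hyU) ((hUK.union hAK).mono ?_)
    rintro a ⟨haU, haA⟩
    by_cases haK : a ∈ K
    exacts [Or.inl ⟨haU, haK⟩, Or.inr ⟨haA, haK⟩]
  have hsep : NoOpenBoxIn K F := by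
    rintro n U hU V ⟨-, c, hcV, hcK⟩ hUV
    obtain ⟨a, haUK, hac⟩ : ∃ a ∈ U ∩ K, ¬ r a c := by
      by_contra! h
      exact hKU U hU ((hpred c hcK.1).mono fun a ha => mem_sep ha.2.1 (h a ha))
    exact hac ((hrF a c).2 (mem_iUnion.2 ⟨n, hUV ⟨haUK, hcV, hcK⟩⟩))
  obtain ⟨P, hP, hPne, hPF⟩ :=
    hsep.exists_perfect_pairwise_notMem_iUnion hFc hKne fun x => (hrF x x).1 (hrefl x)
  exact ⟨P, hP, hPne, hPF.imp fun a b h hab => h ((hrF a b).1 hab)⟩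

namespace Cardinal

theorem not_countable_Iio_ord_aleph_one : ¬ (Iio (aleph 1).ord).Countable := by
  rw [← le_aleph0_iff_set_countable, mk_Iio_ordinal, card_ord, lift_le_aleph0]
  exact aleph0_lt_aleph_one.not_ge

theorem countable_Iic_of_lt_ord_aleph_one {o : Ordinal} (ho : o < (aleph 1).ord) :
    (Iic o).Countable := by
  have hsucc : Order.succ o < (aleph 1).ord := (isSuccLimit_ord (aleph0_le_aleph 1)).succ_lt ho
  rw [← Order.Iio_succ, ← le_aleph0_iff_set_countable, mk_Iio_ordinal, lift_le_aleph0,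
    ← lt_aleph_one_iff]
  exact lt_ord.1 hsucc

end Cardinal

theorem exists_perfect_pairwise_not_rel_of_omega1_seq {X : Type*} [TopologicalSpace X]
    [PolishSpace X] {r : X → X → Prop} (hrefl : ∀ x, r x x)
    (hr : ∃ F : ℕ → Set (X × X), (∀ n, IsClosed (F n)) ∧ {p : X × X | r p.1 p.2} = ⋃ n, F n)
    (x : Ordinal → X)
    (hx : ∀ ξ ζ : Ordinal, ξ < ζ → ζ < (Cardinal.aleph 1).ord → ¬ r (x ζ) (x ξ)) :
    ∃ P : Set X, Perfect P ∧ P.Nonempty ∧ P.Pairwise fun a b => ¬ r a b := by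
  have hinj : InjOn x (Iio (Cardinal.aleph 1).ord) := by
    intro ξ hξ ζ hζ hxξζ
    by_contra hne
    rcases lt_or_gt_of_ne hne with h | h
    · exact hx ξ ζ h hζ (hxξζ ▸ hrefl _)
    · exact hx ζ ξ h hξ (hxξζ ▸ hrefl _)
  refine exists_perfect_pairwise_not_rel_of_countable_predecessors hrefl hr
    (fun h => Cardinal.not_countable_Iio_ord_aleph_one
      ((mapsTo_image x _).countable_of_injOn hinj h)) ?_
  rintro _ ⟨ξ, hξ, rfl⟩
  refine ((Cardinal.countable_Iic_of_lt_ord_aleph_one hξ).image x).mono ?_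
  rintro _ ⟨⟨η, hη, rfl⟩, hηξ⟩
  exact ⟨η, not_lt.1 fun h => hx ξ η h hη hηξ, rfl⟩

theorem exists_closed_iUnion_eq_flip {X : Type*} [TopologicalSpace X] {r : X → X → Prop}
    (hr : ∃ F : ℕ → Set (X × X), (∀ n, IsClosed (F n)) ∧ {p : X × X | r p.1 p.2} = ⋃ n, F n) :
    ∃ F : ℕ → Set (X × X), (∀ n, IsClosed (F n)) ∧ {p : X × X | flip r p.1 p.2} = ⋃ n, F n := by
  obtain ⟨F, hFc, hF⟩ := hr
  refine ⟨fun n => Prod.swap ⁻¹' F n, fun n => (hFc n).preimage continuous_swap, ?_⟩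
  rw [← preimage_iUnion, ← hF]
  rfl

theorem fsigma_thin_order_no_omega1_chain_general
    {X : Type*} [TopologicalSpace X] [PolishSpace X]
    (le : X → X → Prop)
    (hrefl : ∀ x, le x x)
    (hFσ : ∃ F : ℕ → Set (X × X), (∀ n, IsClosed (F n)) ∧
      {p : X × X | le p.1 p.2} = ⋃ n, F n)
    (hthin : ¬ ∃ P : Set X, Perfect P ∧ P.Nonempty ∧
      ∀ a ∈ P, ∀ b ∈ P, a ≠ b → ¬ le a b ∧ ¬ le b a) :
    ¬ ∃ x : Ordinal → X,
      (∀ ξ ζ : Ordinal, ξ < ζ → ζ < (Cardinal.aleph 1).ord →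
        le (x ξ) (x ζ) ∧ ¬ le (x ζ) (x ξ)) ∨
      (∀ ξ ζ : Ordinal, ξ < ζ → ζ < (Cardinal.aleph 1).ord →
        le (x ζ) (x ξ) ∧ ¬ le (x ξ) (x ζ)) := by
  rintro ⟨x, hx | hx⟩
  · obtain ⟨P, hP, hPne, hPle⟩ := exists_perfect_pairwise_not_rel_of_omega1_seq hrefl hFσ x
      fun ξ ζ h hζ => (hx ξ ζ h hζ).2
    exact hthin ⟨P, hP, hPne, fun a ha b hb hab => ⟨hPle ha hb hab, hPle hb ha hab.symm⟩⟩
  · obtain ⟨P, hP, hPne, hPle⟩ := exists_perfect_pairwise_not_rel_of_omega1_seq (r := flip le)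
      hrefl (exists_closed_iUnion_eq_flip hFσ) x fun ξ ζ h hζ => (hx ξ ζ h hζ).2
    exact hthin ⟨P, hP, hPne, fun a ha b hb hab => ⟨hPle hb ha hab.symm, hPle ha hb hab⟩⟩

/-- An F_σ thin quasi-order on a Polish space contains no ω₁-chain
(neither strictly increasing nor strictly decreasing of length ω₁). -/
theorem fsigma_thin_order_no_omega1_chain
    {X : Type*} [TopologicalSpace X] [PolishSpace X]
    (le : X → X → Prop)
    (hrefl : ∀ x, le x x)
    (htrans : ∀ x y z, le x y → le y z → le x z)
    (hFσ : ∃ F : ℕ → Set (X × X), (∀ n, IsClosed (F n)) ∧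
      {p : X × X | le p.1 p.2} = ⋃ n, F n)
    (hthin : ¬ ∃ P : Set X, Perfect P ∧ P.Nonempty ∧
      ∀ a ∈ P, ∀ b ∈ P, a ≠ b → ¬ le a b ∧ ¬ le b a) :
    ¬ ∃ x : Ordinal → X,
      (∀ ξ ζ : Ordinal, ξ < ζ → ζ < (Cardinal.aleph 1).ord →
        le (x ξ) (x ζ) ∧ ¬ le (x ζ) (x ξ)) ∨
      (∀ ξ ζ : Ordinal, ξ < ζ → ζ < (Cardinal.aleph 1).ord →
        le (x ζ) (x ξ) ∧ ¬ le (x ξ) (x ζ)) :=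
  fsigma_thin_order_no_omega1_chain_general le hrefl hFσ hthin
end

section
/- Let X be a Polish space, ∼ a meager F_σ equivalence relation on X² (i.e., ∼ is meager as a subset of X² and is F_σ). If X is nonempty perfect, then there exists a Cantor set P ⊆ X of pairwise inequivalent elements. -/
/-!
The relation minus the diagonal is meagre, and so is the diagonal itself because `X` has no
isolated points; hence the pairs of distinct, inequivalent points form a comeagre set, containing
a countable intersection of dense open sets `Oₙ`. Build a Cantor scheme of nonempty open sets
with vanishing diameters in which any two distinct nodes of length `n + 1` span a box inside
`O₀ ∩ ⋯ ∩ Oₙ`: each step shrinks one pair at a time inside a dense open set. The induced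
continuous map from the Cantor space then sends distinct points to pairs in every `Oₙ`, so it is
injective and its image is the required perfect set.
-/

open Set Filter Topology TopologicalSpace Function Metric CantorScheme
open scoped ENNReal

instance Pi.perfectSpace {ι : Type*} [Infinite ι] {π : ι → Type*} [∀ i, TopologicalSpace (π i)]
    [∀ i, Nontrivial (π i)] : PerfectSpace (∀ i, π i) := by
  classical
  refine ⟨fun x _ => accPt_iff_nhds.2 fun U hU => ?_⟩
  rw [nhds_pi, Filter.mem_pi] at hU
  obtain ⟨I, hI, t, ht, htU⟩ := hU
  obtain ⟨j, hj⟩ := hI.infinite_compl.nonempty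
  obtain ⟨y, hy⟩ := exists_ne (x j)
  refine ⟨update x j y, ⟨htU fun i hi => ?_, mem_univ _⟩, fun h => hy (by simpa using congrFun h j)⟩
  rw [update_of_ne (ne_of_mem_of_not_mem hi hj)]
  exact mem_of_mem_nhds (ht i)

theorem Continuous.preperfect_range {Y X : Type*} [TopologicalSpace Y] [TopologicalSpace X]
    [PerfectSpace Y] {f : Y → X} (hf : Continuous f) (hinj : Injective f) :
    Preperfect (range f) := by
  rw [preperfect_iff_nhds]
  rintro _ ⟨y, rfl⟩ U hU
  obtain ⟨z, ⟨hzU, -⟩, hzy⟩ :=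
    accPt_iff_nhds.1 (PerfectSpace.univ_preperfect y (mem_univ y)) _ (hf.continuousAt hU)
  exact ⟨f z, ⟨hzU, mem_range_self z⟩, hinj.ne hzy⟩

theorem interior_diagonal {X : Type*} [TopologicalSpace X] [PerfectSpace X] :
    interior (diagonal X) = ∅ := by
  refine eq_empty_iff_forall_notMem.2 fun ⟨x, y⟩ hp => ?_
  obtain rfl : x = y := mem_diagonal_iff.1 (interior_subset hp)
  obtain ⟨u, hu, v, hv, huv⟩ := mem_nhds_prod_iff.1 (mem_interior_iff_mem_nhds.1 hp)
  obtain ⟨z, ⟨hzu, -⟩, hzx⟩ := accPt_iff_nhds.1 (PerfectSpace.univ_preperfect x (mem_univ x)) u hu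
  exact hzx (huv (mk_mem_prod hzu (mem_of_mem_nhds hv)))

theorem isMeagre_diagonal {X : Type*} [TopologicalSpace X] [T2Space X] [PerfectSpace X] :
    IsMeagre (diagonal X) :=
  IsNowhereDense.isMeagre <| isClosed_diagonal.isNowhereDense_iff.2 interior_diagonal

section Shrinking

variable {X Y : Type*} [TopologicalSpace X] [TopologicalSpace Y]

theorem Dense.exists_prod_subset {D : Set (X × Y)} (hD : Dense D) (hDo : IsOpen D)
    {U : Set X} {V : Set Y} (hU : IsOpen U) (hV : IsOpen V) (hUne : U.Nonempty)
    (hVne : V.Nonempty) :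
    ∃ U' ⊆ U, ∃ V' ⊆ V, IsOpen U' ∧ U'.Nonempty ∧ IsOpen V' ∧ V'.Nonempty ∧ U' ×ˢ V' ⊆ D := by
  obtain ⟨⟨x, y⟩, hxy, hxyD⟩ := hD.inter_open_nonempty _ (hU.prod hV) (hUne.prod hVne)
  obtain ⟨u, v, hu, hv, hxu, hyv, huv⟩ :=
    isOpen_prod_iff.1 (hDo.inter (hU.prod hV)) x y ⟨hxyD, hxy⟩
  exact ⟨u ∩ U, inter_subset_right, v ∩ V, inter_subset_right, hu.inter hU, ⟨x, hxu, hxy.1⟩,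
    hv.inter hV, ⟨y, hyv, hxy.2⟩, (prod_mono inter_subset_left inter_subset_left).trans
      (huv.trans inter_subset_left)⟩

variable {ι : Type*} {D : Set (X × X)}

theorem Dense.exists_shrink_prod_subset_of_ne [DecidableEq ι] (hD : Dense D) (hDo : IsOpen D)
    {U : ι → Set X} (hU : ∀ k, IsOpen (U k) ∧ (U k).Nonempty) {i j : ι} (hij : i ≠ j) :
    ∃ V : ι → Set X, (∀ k, V k ⊆ U k ∧ IsOpen (V k) ∧ (V k).Nonempty) ∧ V i ×ˢ V j ⊆ D := by
  obtain ⟨A, hAU, B, hBU, hAo, hAne, hBo, hBne, hAB⟩ :=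
    hD.exists_prod_subset hDo (hU i).1 (hU j).1 (hU i).2 (hU j).2
  refine ⟨update (update U i A) j B, fun k => ?_, by simpa [hij] using hAB⟩
  rcases eq_or_ne k j with rfl | hkj
  · simpa using ⟨hBU, hBo, hBne⟩
  rcases eq_or_ne k i with rfl | hki
  · simpa [hkj] using ⟨hAU, hAo, hAne⟩
  · simpa [hkj, hki] using hU k

theorem Dense.exists_shrink_prod_subset_of_finite (hD : Dense D) (hDo : IsOpen D) {s : Set (ι × ι)}
    (hs : s.Finite) (hoff : ∀ p ∈ s, p.1 ≠ p.2) {U : ι → Set X}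
    (hU : ∀ k, IsOpen (U k) ∧ (U k).Nonempty) :
    ∃ V : ι → Set X, (∀ k, V k ⊆ U k ∧ IsOpen (V k) ∧ (V k).Nonempty) ∧
      ∀ p ∈ s, V p.1 ×ˢ V p.2 ⊆ D := by
  classical
  induction s, hs using Set.Finite.induction_on with
  | empty => exact ⟨U, fun k => ⟨subset_rfl, hU k⟩, by simp⟩
  | @insert p s _ _ ih =>
    obtain ⟨W, hW, hWs⟩ := ih fun q hq => hoff q (mem_insert_of_mem p hq)
    obtain ⟨V, hV, hVp⟩ :=
      hD.exists_shrink_prod_subset_of_ne hDo (fun k => (hW k).2) (hoff p (mem_insert p s))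
    refine ⟨V, fun k => ⟨(hV k).1.trans (hW k).1, (hV k).2⟩, ?_⟩
    rintro q (rfl | hq)
    · exact hVp
    · exact (prod_mono (hV q.1).1 (hV q.2).1).trans (hWs q hq)

end Shrinking

section Scheme

variable {X : Type*} [PseudoMetricSpace X]

theorem exists_isOpen_closure_subset_ediam_le {U : Set X} (hU : IsOpen U) (hUne : U.Nonempty)
    {ε : ℝ≥0∞} (hε : 0 < ε) :
    ∃ V, IsOpen V ∧ V.Nonempty ∧ closure V ⊆ U ∧ ediam V ≤ ε := by
  obtain ⟨x, hx⟩ := hUne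
  obtain ⟨t, ht, htc, htU⟩ := exists_mem_nhds_isClosed_subset (hU.mem_nhds hx)
  refine ⟨interior t ∩ eball x (ε / 2), isOpen_interior.inter isOpen_eball,
    ⟨x, mem_interior_iff_mem_nhds.2 ht, mem_eball_self (by simpa using hε.ne')⟩,
    (closure_mono (inter_subset_left.trans interior_subset)).trans (htc.closure_subset.trans htU),
    ?_⟩
  calc ediam (interior t ∩ eball x (ε / 2)) ≤ ediam (eball x (ε / 2)) :=
        ediam_mono inter_subset_right
    _ ≤ 2 * (ε / 2) := ediam_eball_le
    _ = ε := ENNReal.mul_div_cancel (by norm_num) (by norm_num)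

theorem Dense.exists_cantorScheme_step {D : Set (X × X)} (hD : Dense D) (hDo : IsOpen D)
    {ε : ℝ≥0∞} (hε : 0 < ε) (n : ℕ) {U : List Bool → Set X}
    (hU : ∀ l, IsOpen (U l) ∧ (U l).Nonempty) :
    ∃ V : List Bool → Set X, (∀ l, IsOpen (V l) ∧ (V l).Nonempty) ∧
      (∀ l, closure (V l) ⊆ U l.tail ∧ ediam (V l) ≤ ε) ∧
      ∀ l₁ l₂ : List Bool, l₁.length = n → l₂.length = n → l₁ ≠ l₂ → V l₁ ×ˢ V l₂ ⊆ D := by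
  choose W hWo hWne hWU hWε using
    fun l : List Bool => exists_isOpen_closure_subset_ediam_le (hU l.tail).1 (hU l.tail).2 hε
  obtain ⟨V, hV, hVD⟩ :=
    hD.exists_shrink_prod_subset_of_finite hDo (List.finite_length_eq Bool n).offDiag
    (fun p hp => (mem_offDiag.1 hp).2.2) fun l => ⟨hWo l, hWne l⟩
  exact ⟨V, fun l => (hV l).2,
    fun l => ⟨(closure_mono (hV l).1).trans (hWU l), (ediam_mono (hV l).1).trans (hWε l)⟩,
    fun l₁ l₂ h₁ h₂ hne => hVD (l₁, l₂) ⟨h₁, h₂, hne⟩⟩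

theorem exists_continuous_nat_bool_prod_mem_of_dense [CompleteSpace X] [Nonempty X]
    {D : ℕ → Set (X × X)} (hD : ∀ n, Dense (D n)) (hDo : ∀ n, IsOpen (D n)) :
    ∃ f : (ℕ → Bool) → X, Continuous f ∧
      ∀ n (x y : ℕ → Bool), PiNat.res x (n + 1) ≠ PiNat.res y (n + 1) → (f x, f y) ∈ D n := by
  let T := {U : List Bool → Set X // ∀ l, IsOpen (U l) ∧ (U l).Nonempty}
  choose next hnext using fun n (U : T) =>
    (hD n).exists_cantorScheme_step (hDo n) (ε := ((n + 1 : ℕ) : ℝ≥0∞)⁻¹) (by simp) (n + 1) U.2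
  let U : ℕ → T := fun n => Nat.rec ⟨fun _ => univ, fun _ => ⟨isOpen_univ, univ_nonempty⟩⟩
    (fun n V => ⟨next n V, (hnext n V).1⟩) n
  -- each level is a family over all lists; only the lists of its own length enter the scheme
  let A : List Bool → Set X := fun l => (U l.length).1 l
  have hanti : ClosureAntitone A := fun l a => ((hnext l.length (U l.length)).2.1 (a :: l)).1
  have hApair : ∀ n l₁ l₂, l₁.length = n + 1 → l₂.length = n + 1 → l₁ ≠ l₂ →
      A l₁ ×ˢ A l₂ ⊆ D n := by
    intro n l₁ l₂ h₁ h₂ hne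
    dsimp only [A]
    rw [h₁, h₂]
    exact (hnext n (U n)).2.2 l₁ l₂ h₁ h₂ hne
  have hdiam : ∀ l, ediam (A l) ≤ (l.length : ℝ≥0∞)⁻¹ := by
    rintro (_ | ⟨a, l⟩)
    · simp
    · exact ((hnext l.length (U l.length)).2.1 (a :: l)).2
  have hvan : VanishingDiam A := fun x =>
    tendsto_of_tendsto_of_tendsto_of_le_of_le tendsto_const_nhds ENNReal.tendsto_inv_nat_nhds_zero
      (fun n => zero_le) fun n => by simpa [PiNat.res_length] using hdiam (PiNat.res x n)
  have hdom := hanti.map_of_vanishingDiam hvan fun l => ((U l.length).2 l).2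
  let f : (ℕ → Bool) → X := fun x => (inducedMap A).2 ⟨x, hdom ▸ mem_univ x⟩
  have hfA : ∀ x n, f x ∈ A (PiNat.res x n) := fun x => map_mem _
  refine ⟨f, hvan.map_continuous.comp (by fun_prop), fun n x y hxy => ?_⟩
  exact hApair n _ _ (PiNat.res_length x (n + 1)) (PiNat.res_length y (n + 1)) hxy
    (mk_mem_prod (hfA x (n + 1)) (hfA y (n + 1)))

end Scheme

theorem exists_continuous_nat_bool_prod_mem_of_mem_residual {X : Type*} [TopologicalSpace X]
    [IsCompletelyPseudoMetrizableSpace X] [Nonempty X] {G : Set (X × X)}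
    (hG : G ∈ residual (X × X)) :
    ∃ f : (ℕ → Bool) → X, Continuous f ∧ ∀ x y, x ≠ y → (f x, f y) ∈ G := by
  let := upgradeIsCompletelyPseudoMetrizable X
  obtain ⟨_, htG, htδ, htd⟩ := mem_residual.1 hG
  obtain ⟨O, hO, rfl⟩ := htδ.eq_iInter_nat
  obtain ⟨f, hfc, hf⟩ :=
    exists_continuous_nat_bool_prod_mem_of_dense (D := fun n => ⋂ k : Fin (n + 1), O k)
    (fun n => htd.mono (subset_iInter fun k => iInter_subset _ _))
    (fun n => isOpen_iInter_of_finite fun k => hO k)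
  refine ⟨f, hfc, fun x y hxy => htG (mem_iInter.2 fun n => ?_)⟩
  obtain ⟨m, hm⟩ := ne_iff.1 hxy
  have := hf (max n m) x y fun h => hm (PiNat.res_eq_res.1 h (by omega))
  exact mem_iInter.1 this ⟨n, by omega⟩

theorem mycielski_meager_equivalence_general
    {X : Type*} [TopologicalSpace X] [PolishSpace X] [Nonempty X]
    (hXperf : Perfect (Set.univ : Set X))
    (r : X → X → Prop)
    (hmeager : IsMeagre {p : X × X | r p.1 p.2 ∧ p.1 ≠ p.2}) :
    ∃ P : Set X, Perfect P ∧ P.Nonempty ∧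
      ∀ a ∈ P, ∀ b ∈ P, a ≠ b → ¬ r a b := by
  have : PerfectSpace X := ⟨hXperf.acc⟩
  obtain ⟨f, hfc, hf⟩ :=
    exists_continuous_nat_bool_prod_mem_of_mem_residual (inter_mem hmeager isMeagre_diagonal)
  have hinj : Injective f := fun x y hxy => by_contra fun hne => (hf x y hne).2 hxy
  refine ⟨range f, ⟨(isCompact_range hfc).isClosed, hfc.preperfect_range hinj⟩,
    range_nonempty f, ?_⟩
  rintro _ ⟨x, rfl⟩ _ ⟨y, rfl⟩ hne hr
  exact (hf x y (ne_of_apply_ne f hne)).1 ⟨hr, hne⟩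

/-- Mycielski instance: if X is a nonempty perfect Polish space and ∼ is a
meager F_σ equivalence relation (meager off the diagonal), then there is a Cantor set of
pairwise inequivalent elements. -/
theorem mycielski_meager_equivalence
    {X : Type*} [TopologicalSpace X] [PolishSpace X] [Nonempty X]
    (hXperf : Perfect (Set.univ : Set X))
    (r : X → X → Prop)
    (hequiv : Equivalence r)
    (hFσ : ∃ F : ℕ → Set (X × X), (∀ n, IsClosed (F n)) ∧
      {p : X × X | r p.1 p.2} = ⋃ n, F n)
    (hmeager : IsMeagre {p : X × X | r p.1 p.2 ∧ p.1 ≠ p.2}) :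
    ∃ P : Set X, Perfect P ∧ P.Nonempty ∧
      ∀ a ∈ P, ∀ b ∈ P, a ≠ b → ¬ r a b :=
  mycielski_meager_equivalence_general hXperf r hmeager
end

section
/- Let X be a separable Banach space and let SPC ⊆ X^ℕ be the set of sequences (x_n) that are seminormalized, Schauder basic, Cesàro summable (the averages (x_0+...+x_{n-1})/n converge to 0 in norm), and C-Schreier spreading for some C ≥ 1. Then SPC is a Borel subset of X^ℕ (with the product topology). -/
open Set Finset Filter

section

variable {X : Type*} [NormedAddCommGroup X] [NormedSpace ℝ X]

/-- `(x_n)` is seminormalized: `0 < inf ‖x_n‖ ≤ sup ‖x_n‖ < ∞`. -/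
def Seminormalized (x : ℕ → X) : Prop :=
  ∃ c C : ℝ, 0 < c ∧ ∀ n, c ≤ ‖x n‖ ∧ ‖x n‖ ≤ C

/-- `(x_n)` is a Schauder basic sequence (nonzero with uniformly bounded basis
projections). -/
def SchauderBasicSeq (x : ℕ → X) : Prop :=
  (∀ n, x n ≠ 0) ∧ ∃ K : ℝ, 1 ≤ K ∧ ∀ m n : ℕ, m ≤ n → ∀ a : ℕ → ℝ,
    ‖∑ i ∈ Finset.range m, a i • x i‖ ≤ K * ‖∑ i ∈ Finset.range n, a i • x i‖

/-- `(x_n)` is Cesàro summable to 0: the averages `(x_0 + ⋯ + x_{n-1})/n` tend to `0`. -/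
def CesaroNull (x : ℕ → X) : Prop :=
  Tendsto (fun n : ℕ => (n : ℝ)⁻¹ • ∑ i ∈ Finset.range n, x i) atTop (nhds 0)

/-- `(x_n)` is `C`-Schreier spreading: for every `k` and every `k ≤ n_0 < ⋯ < n_k`,
`k ≤ m_0 < ⋯ < m_k`, the finite subsequences are `C`-equivalent. (By symmetry in
`n, m`, one inequality for all admissible pairs expresses `C`-equivalence.) -/
def SchreierSpreading (C : ℝ) (x : ℕ → X) : Prop :=
  ∀ (k : ℕ) (n m : ℕ → ℕ), StrictMono n → StrictMono m → k ≤ n 0 → k ≤ m 0 →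
    ∀ a : ℕ → ℝ,
      ‖∑ i ∈ Finset.range (k + 1), a i • x (n i)‖ ≤
        C * ‖∑ i ∈ Finset.range (k + 1), a i • x (m i)‖

end

/-!
Every condition is a countable Boolean combination of closed subsets of `X^ℕ`: the norm of a
fixed finite linear combination `∑ aᵢ x_{σ i}` depends continuously on finitely many
coordinates, so each inequality with a fixed constant cuts out a closed set, and by monotonicity
in the constant an existential `∃ C ≥ 1` may be restricted to integer values of `C`.
-/

theorem measurableSet_setOf_exists_one_le {α : Type*} [MeasurableSpace α] {P : ℝ → α → Prop}
    (hmono : ∀ x, MonotoneOn (P · x) (Ici 1)) (hmeas : ∀ C, MeasurableSet {x | P C x}) :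
    MeasurableSet {x | ∃ C, 1 ≤ C ∧ P C x} := by
  have hunion : {x | ∃ C, 1 ≤ C ∧ P C x} = ⋃ N : ℕ, {x | P (N + 1) x} := by
    ext x
    simp only [mem_ofPred_eq, mem_iUnion]
    constructor
    · rintro ⟨C, hC, hP⟩
      obtain ⟨N, hN⟩ := exists_nat_ge C
      have hN1 : 1 ≤ (N : ℝ) + 1 := by linarith [N.cast_nonneg (α := ℝ)]
      exact ⟨N, hmono x hC hN1 (by linarith) hP⟩
    · rintro ⟨N, hP⟩
      exact ⟨N + 1, by linarith [N.cast_nonneg (α := ℝ)], hP⟩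
  rw [hunion]
  exact .iUnion fun N => hmeas _

section

variable {X : Type*} [NormedAddCommGroup X]

theorem seminormalized_iff {x : ℕ → X} :
    Seminormalized x ↔ ∃ C : ℝ, 1 ≤ C ∧ ∀ n, ‖x n‖ ∈ Icc C⁻¹ C := by
  constructor
  · rintro ⟨c, C, hc, h⟩
    refine ⟨max (max 1 C) c⁻¹, (le_max_left _ _).trans (le_max_left _ _), fun n => ⟨?_, ?_⟩⟩
    · calc (max (max 1 C) c⁻¹)⁻¹ ≤ c⁻¹⁻¹ := inv_anti₀ (inv_pos.2 hc) (le_max_right _ _)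
        _ = c := inv_inv c
        _ ≤ ‖x n‖ := (h n).1
    · exact (h n).2.trans ((le_max_right _ _).trans (le_max_left _ _))
  · rintro ⟨C, hC, h⟩
    exact ⟨C⁻¹, C, inv_pos.2 (by linarith), h⟩

theorem isClosed_setOf_norm_mem_Icc (C : ℝ) :
    IsClosed {x : ℕ → X | ∀ n, ‖x n‖ ∈ Icc C⁻¹ C} := by
  simp only [ofPred_forall]
  exact isClosed_iInter fun n => isClosed_Icc.preimage (continuous_apply n).norm

theorem measurableSet_setOf_seminormalized [MeasurableSpace (ℕ → X)]
    [OpensMeasurableSpace (ℕ → X)] : MeasurableSet {x : ℕ → X | Seminormalized x} := by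
  simp only [seminormalized_iff]
  refine measurableSet_setOf_exists_one_le (fun _ C hC D _ hCD h n => ?_)
    fun C => (isClosed_setOf_norm_mem_Icc C).measurableSet
  exact Icc_subset_Icc (inv_anti₀ (zero_lt_one.trans_le hC) hCD) hCD (h n)

variable [NormedSpace ℝ X]

theorem continuous_norm_sum_smul_apply (s : Finset ℕ) (a : ℕ → ℝ) (σ : ℕ → ℕ) :
    Continuous fun x : ℕ → X => ‖∑ i ∈ s, a i • x (σ i)‖ := by
  fun_prop

def IsBasicWithConstant (K : ℝ) (x : ℕ → X) : Prop :=
  ∀ m n : ℕ, m ≤ n → ∀ a : ℕ → ℝ,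
    ‖∑ i ∈ Finset.range m, a i • x i‖ ≤ K * ‖∑ i ∈ Finset.range n, a i • x i‖

theorem IsBasicWithConstant.mono {K L : ℝ} {x : ℕ → X} (hKL : K ≤ L)
    (h : IsBasicWithConstant K x) : IsBasicWithConstant L x :=
  fun m n hmn a => (h m n hmn a).trans (by gcongr)

theorem isClosed_setOf_isBasicWithConstant (K : ℝ) :
    IsClosed {x : ℕ → X | IsBasicWithConstant K x} := by
  simp only [IsBasicWithConstant, ofPred_forall]
  exact isClosed_iInter fun m => isClosed_iInter fun n => isClosed_iInter fun _ =>
    isClosed_iInter fun a => isClosed_le (continuous_norm_sum_smul_apply _ a id)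
      (continuous_const.mul (continuous_norm_sum_smul_apply _ a id))

theorem SchreierSpreading.mono {C D : ℝ} {x : ℕ → X} (hCD : C ≤ D)
    (h : SchreierSpreading C x) : SchreierSpreading D x :=
  fun k n m hn hm hn0 hm0 a => (h k n m hn hm hn0 hm0 a).trans (by gcongr)

theorem isClosed_setOf_schreierSpreading (C : ℝ) :
    IsClosed {x : ℕ → X | SchreierSpreading C x} := by
  simp only [SchreierSpreading, ofPred_forall]
  exact isClosed_iInter fun k => isClosed_iInter fun n => isClosed_iInter fun m =>
    isClosed_iInter fun _ => isClosed_iInter fun _ => isClosed_iInter fun _ =>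
    isClosed_iInter fun _ => isClosed_iInter fun a =>
      isClosed_le (continuous_norm_sum_smul_apply _ a n)
        (continuous_const.mul (continuous_norm_sum_smul_apply _ a m))

variable [MeasurableSpace (ℕ → X)] [OpensMeasurableSpace (ℕ → X)]

theorem measurableSet_setOf_schauderBasicSeq :
    MeasurableSet {x : ℕ → X | SchauderBasicSeq x} := by
  have hnonzero : MeasurableSet {x : ℕ → X | ∀ n, x n ≠ 0} := by
    simp only [ofPred_forall]
    exact .iInter fun n => (isOpen_ne.preimage (continuous_apply n)).measurableSet
  exact hnonzero.inter <| measurableSet_setOf_exists_one_le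
    (P := IsBasicWithConstant) (fun _ _ _ _ _ hKL h => h.mono hKL)
    fun K => (isClosed_setOf_isBasicWithConstant K).measurableSet

theorem measurableSet_setOf_cesaroNull : MeasurableSet {x : ℕ → X | CesaroNull x} := by
  borelize X
  exact measurableSet_tendsto _ fun n => by fun_prop

theorem measurableSet_setOf_exists_schreierSpreading :
    MeasurableSet {x : ℕ → X | ∃ C : ℝ, 1 ≤ C ∧ SchreierSpreading C x} :=
  measurableSet_setOf_exists_one_le (fun _ _ _ _ _ hCD h => h.mono hCD)
    fun C => (isClosed_setOf_schreierSpreading C).measurableSet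

end

theorem SPC_isBorel_general
    {X : Type*} [NormedAddCommGroup X] [NormedSpace ℝ X] :
    @MeasurableSet (ℕ → X) (borel (ℕ → X))
      {x : ℕ → X | Seminormalized x ∧ SchauderBasicSeq x ∧ CesaroNull x ∧
        ∃ C : ℝ, 1 ≤ C ∧ SchreierSpreading C x} := by
  borelize (ℕ → X)
  simp only [ofPred_and]
  exact measurableSet_setOf_seminormalized.inter <| measurableSet_setOf_schauderBasicSeq.inter <|
    measurableSet_setOf_cesaroNull.inter measurableSet_setOf_exists_schreierSpreading

/-- For a separable Banach space `X`, the set `SPC` of sequences in `X^ℕ`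
which are seminormalized, Schauder basic, Cesàro summable and `C`-Schreier spreading for
some `C ≥ 1` is Borel in `X^ℕ` with the product topology. -/
theorem SPC_isBorel
    {X : Type*} [NormedAddCommGroup X] [NormedSpace ℝ X] [CompleteSpace X]
    [TopologicalSpace.SeparableSpace X] :
    @MeasurableSet (ℕ → X) (borel (ℕ → X))
      {x : ℕ → X | Seminormalized x ∧ SchauderBasicSeq x ∧ CesaroNull x ∧
        ∃ C : ℝ, 1 ≤ C ∧ SchreierSpreading C x} :=
  SPC_isBorel_general
end

section
/- Let X be a Banach space and (x_n) a seminormalized Schauder basic sequence in X (with basis constant K) which is C-Schreier spreading and Cesàro summable (‖(x_0+...+x_{n-1})/n‖ → 0). Then (x_n) is weakly null. -/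
/-! If `g (x n) ≥ ε` along a subsequence `φ`, then for each `k` the block `x (φ k), …, x (φ (2k))`
starts beyond `k`, so Schreier spreading compares it with the block `x (k+1), …, x (2k+1)`, and
`(k + 1) ε ≤ ‖g‖ C ‖x (k+1) + … + x (2k+1)‖`. This block is a difference of two partial sums,
hence of norm at most `(K + 1) ‖x 0 + … + x (2k+1)‖`, which is `o(k)` by Cesàro summability. -/

open Set Finset Filter

lemma norm_sum_range_add_le {E : Type*} [SeminormedAddCommGroup E]
    (x : ℕ → E) {K : ℝ}
    (hK : ∀ m n : ℕ, m ≤ n → ‖∑ i ∈ range m, x i‖ ≤ K * ‖∑ i ∈ range n, x i‖) (m l : ℕ) :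
    ‖∑ i ∈ range l, x (m + i)‖ ≤ (K + 1) * ‖∑ i ∈ range (m + l), x i‖ :=
  calc ‖∑ i ∈ range l, x (m + i)‖
      = ‖∑ i ∈ range (m + l), x i - ∑ i ∈ range m, x i‖ := by
        rw [sum_range_add, add_sub_cancel_left]
    _ ≤ ‖∑ i ∈ range (m + l), x i‖ + ‖∑ i ∈ range m, x i‖ := norm_sub_le _ _
    _ ≤ ‖∑ i ∈ range (m + l), x i‖ + K * ‖∑ i ∈ range (m + l), x i‖ := by
        gcongr; exact hK m (m + l) (Nat.le_add_right m l)
    _ = (K + 1) * ‖∑ i ∈ range (m + l), x i‖ := by ring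

lemma tendsto_inv_mul_norm_sum_range_add_self {E : Type*} [SeminormedAddCommGroup E]
    [NormedSpace ℝ E] (x : ℕ → E) {K : ℝ}
    (hK : ∀ m n : ℕ, m ≤ n → ‖∑ i ∈ range m, x i‖ ≤ K * ‖∑ i ∈ range n, x i‖)
    (hcesaro : Tendsto (fun n : ℕ => (n : ℝ)⁻¹ • ∑ i ∈ range n, x i) atTop (nhds 0)) :
    Tendsto (fun n : ℕ => (n : ℝ)⁻¹ * ‖∑ i ∈ range n, x (n + i)‖) atTop (nhds 0) := by
  have hdouble : Tendsto (fun n : ℕ =>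
      2 * (K + 1) * ‖((n + n : ℕ) : ℝ)⁻¹ • ∑ i ∈ range (n + n), x i‖) atTop (nhds 0) := by
    have := ((hcesaro.comp (strictMono_id.add strictMono_id).tendsto_atTop).norm).const_mul
      (2 * (K + 1))
    rwa [norm_zero, mul_zero] at this
  refine squeeze_zero (fun n => by positivity) (fun n => ?_) hdouble
  calc (n : ℝ)⁻¹ * ‖∑ i ∈ range n, x (n + i)‖
      ≤ (n : ℝ)⁻¹ * ((K + 1) * ‖∑ i ∈ range (n + n), x i‖) := by
        gcongr; exact norm_sum_range_add_le x hK n n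
    _ = 2 * (K + 1) * ‖((n + n : ℕ) : ℝ)⁻¹ • ∑ i ∈ range (n + n), x i‖ := by
        rw [norm_smul, Real.norm_of_nonneg (by positivity), Nat.cast_add]
        ring

section

variable {X : Type*} [NormedAddCommGroup X] [NormedSpace ℝ X]

lemma SchreierSpreading.mul_le_norm_mul_norm_sum {C : ℝ} {x : ℕ → X}
    (hspread : SchreierSpreading C x) (g : StrongDual ℝ X) {φ : ℕ → ℕ} (hφ : StrictMono φ)
    {ε : ℝ} (hε : ∀ j, ε ≤ g (x (φ j))) (k : ℕ) :
    ((k : ℝ) + 1) * ε ≤ ‖g‖ * C * ‖∑ i ∈ range (k + 1), x (k + 1 + i)‖ := by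
  have hspread_block : ‖∑ i ∈ range (k + 1), x (φ (k + i))‖ ≤
      C * ‖∑ i ∈ range (k + 1), x (k + 1 + i)‖ := by
    simpa using hspread k (fun i => φ (k + i)) (fun i => k + 1 + i)
      (hφ.comp (strictMono_id.const_add k)) (strictMono_id.const_add (k + 1))
      (hφ.le_apply.trans_eq (by simp)) (Nat.le_succ k) (fun _ => 1)
  calc ((k : ℝ) + 1) * ε = ∑ _i ∈ range (k + 1), ε := by simp
    _ ≤ g (∑ i ∈ range (k + 1), x (φ (k + i))) := by
        rw [map_sum]; exact sum_le_sum fun i _ => hε (k + i)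
    _ ≤ ‖g‖ * ‖∑ i ∈ range (k + 1), x (φ (k + i))‖ := (le_abs_self _).trans (g.le_opNorm _)
    _ ≤ ‖g‖ * C * ‖∑ i ∈ range (k + 1), x (k + 1 + i)‖ := by
        rw [mul_assoc]; gcongr

lemma SchreierSpreading.eventually_apply_lt {C K : ℝ} {x : ℕ → X}
    (hspread : SchreierSpreading C x)
    (hK : ∀ m n : ℕ, m ≤ n → ‖∑ i ∈ range m, x i‖ ≤ K * ‖∑ i ∈ range n, x i‖)
    (hcesaro : Tendsto (fun n : ℕ => (n : ℝ)⁻¹ • ∑ i ∈ range n, x i) atTop (nhds 0))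
    (g : StrongDual ℝ X) {ε : ℝ} (hε : 0 < ε) :
    ∀ᶠ n in atTop, g (x n) < ε := by
  by_contra hfreq
  simp only [not_eventually, not_lt] at hfreq
  obtain ⟨φ, hφ, hεφ⟩ := extraction_of_frequently_atTop hfreq
  have hblock := ((tendsto_inv_mul_norm_sum_range_add_self x hK hcesaro).comp
    (tendsto_add_atTop_nat 1)).const_mul (‖g‖ * C)
  rw [mul_zero] at hblock
  refine hε.not_ge (ge_of_tendsto' hblock fun k => ?_)
  have hk := hspread.mul_le_norm_mul_norm_sum g hφ hεφ k
  have hk_pos : (0 : ℝ) < k + 1 := k.cast_add_one_pos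
  simp only [Function.comp_apply, Nat.cast_add_one]
  rw [← mul_assoc, mul_comm (‖g‖ * C), mul_assoc, le_inv_mul_iff₀ hk_pos]
  exact hk

end

theorem schreier_spreading_cesaro_weakly_null_general
    {X : Type*} [NormedAddCommGroup X] [NormedSpace ℝ X]
    (x : ℕ → X)
    (K : ℝ)
    (hbasic : (∀ n, x n ≠ 0) ∧ ∀ m n : ℕ, m ≤ n → ∀ a : ℕ → ℝ,
      ‖∑ i ∈ Finset.range m, a i • x i‖ ≤ K * ‖∑ i ∈ Finset.range n, a i • x i‖)
    (C : ℝ) (hspread : SchreierSpreading C x)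
    (hcesaro : Tendsto (fun n : ℕ => (n : ℝ)⁻¹ • ∑ i ∈ Finset.range n, x i)
      atTop (nhds 0)) :
    ∀ f : StrongDual ℝ X, Tendsto (fun n => f (x n)) atTop (nhds 0) := by
  have hpartial : ∀ m n : ℕ, m ≤ n →
      ‖∑ i ∈ range m, x i‖ ≤ K * ‖∑ i ∈ range n, x i‖ := fun m n hmn => by
    simpa using hbasic.2 m n hmn fun _ => 1
  intro f
  refine tendsto_order.2 ⟨fun a ha => ?_, fun a ha => ?_⟩
  · filter_upwards [hspread.eventually_apply_lt hpartial hcesaro (-f) (neg_pos.2 ha)] with n hn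
    simpa [neg_lt] using hn
  · exact hspread.eventually_apply_lt hpartial hcesaro f ha

/-- A seminormalized Schauder basic sequence which is `C`-Schreier
spreading and Cesàro summable is weakly null. -/
theorem schreier_spreading_cesaro_weakly_null
    {X : Type*} [NormedAddCommGroup X] [NormedSpace ℝ X] [CompleteSpace X]
    (x : ℕ → X)
    (hsemi : ∃ c C : ℝ, 0 < c ∧ ∀ n, c ≤ ‖x n‖ ∧ ‖x n‖ ≤ C)
    (K : ℝ) (hK : 1 ≤ K)
    (hbasic : (∀ n, x n ≠ 0) ∧ ∀ m n : ℕ, m ≤ n → ∀ a : ℕ → ℝ,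
      ‖∑ i ∈ Finset.range m, a i • x i‖ ≤ K * ‖∑ i ∈ Finset.range n, a i • x i‖)
    (C : ℝ) (hC : 1 ≤ C) (hspread : SchreierSpreading C x)
    (hcesaro : Tendsto (fun n : ℕ => (n : ℝ)⁻¹ • ∑ i ∈ Finset.range n, x i)
      atTop (nhds 0)) :
    ∀ f : StrongDual ℝ X, Tendsto (fun n => f (x n)) atTop (nhds 0) :=
  schreier_spreading_cesaro_weakly_null_general x K hbasic C hspread hcesaro
end

section
/- Let K ≥ 1 and let (u_n) be a Schauder basic sequence in a Banach space. Define the symmetric relation ≈_K on [ℕ] × [ℕ] by L ≈_K M iff either (u_n)_{n∈L} is K-dominated by (u_n)_{n∈M} or (u_n)_{n∈M} is K-dominated by (u_n)_{n∈L}. Then ≈_K is a closed subset of [ℕ] × [ℕ]; in particular, if U ⊆ [ℕ] satisfies L ≈_K M for all L, M ∈ U, then the same holds for all L, M in the closure of U in [ℕ]. -/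
open Set Finset

/-- The Polish space `[ℕ]` of infinite subsets of ℕ inside `2^ℕ`. -/
abbrev InfSubsetNat : Type := {f : ℕ → Bool // {n : ℕ | f n = true}.Infinite}

/-- The increasing enumeration of an infinite subset of ℕ. -/
noncomputable def infEnum (L : InfSubsetNat) (i : ℕ) : ℕ :=
  Nat.nth (fun n => L.1 n = true) i

/-- `L` is `K`-dominated by `M` along the basic sequence `u`. -/
def DomK {U : Type*} [NormedAddCommGroup U] [NormedSpace ℝ U]
    (u : ℕ → U) (K : ℝ) (L M : InfSubsetNat) : Prop :=
  ∀ k : ℕ, ∀ a : ℕ → ℝ,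
    ‖∑ i ∈ Finset.range (k + 1), a i • u (infEnum L i)‖ ≤
      K * ‖∑ i ∈ Finset.range (k + 1), a i • u (infEnum M i)‖

/-! The first `k + 1` elements of `L` are determined by finitely many coordinates of `L`, so
`L ↦ infEnum L i` is locally constant. Hence each inequality in `DomK` cuts out a closed set,
and `≈_K` is a union of two intersections of closed sets. -/

theorem Nat.count_congr {p q : ℕ → Prop} [DecidablePred p] [DecidablePred q] {n : ℕ}
    (h : ∀ m < n, (p m ↔ q m)) : Nat.count p n = Nat.count q n :=
  le_antisymm (Nat.count_mono_left fun m hm => (h m hm).1)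
    (Nat.count_mono_left fun m hm => (h m hm).2)

theorem Nat.nth_eq_of_forall_le_nth_iff {p q : ℕ → Prop} (hp : (Set.ofPred p).Infinite) {i : ℕ}
    (h : ∀ m ≤ Nat.nth p i, (p m ↔ q m)) : Nat.nth q i = Nat.nth p i := by
  classical
  have hq : q (Nat.nth p i) := (h _ le_rfl).1 (Nat.nth_mem_of_infinite hp i)
  have hcount : Nat.count q (Nat.nth p i) = i := by
    rw [← Nat.count_congr fun m hm => h m hm.le, Nat.count_nth_of_infinite hp]
  rw [← Nat.nth_count hq, hcount]

theorem isLocallyConstant_infEnum (i : ℕ) : IsLocallyConstant fun L => infEnum L i := by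
  rw [IsLocallyConstant.iff_eventually_eq]
  intro L
  have hcoord : ∀ m, ∀ᶠ L' in nhds L, L'.1 m = L.1 m := fun m =>
    Filter.tendsto_pure.1 <| nhds_discrete Bool ▸
      ((continuous_apply m).comp continuous_subtype_val).continuousAt
  filter_upwards [(Finset.range (infEnum L i + 1)).eventually_all.2 fun m _ => hcoord m]
    with L' hL'
  exact Nat.nth_eq_of_forall_le_nth_iff L.2 fun m hm =>
    by rw [hL' m (Finset.mem_range_succ_iff.2 hm)]

theorem continuous_sum_smul_infEnum {E : Type*} [AddCommMonoid E] [Module ℝ E]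
    [TopologicalSpace E] [ContinuousAdd E] (u : ℕ → E) (a : ℕ → ℝ) (s : Finset ℕ) :
    Continuous fun L => ∑ i ∈ s, a i • u (infEnum L i) :=
  continuous_finsetSum _ fun i _ =>
    ((isLocallyConstant_infEnum i).comp fun n => a i • u n).continuous

theorem isClosed_setOf_domK {E X : Type*} [NormedAddCommGroup E] [NormedSpace ℝ E]
    [TopologicalSpace X] (u : ℕ → E) (K : ℝ) {f g : X → InfSubsetNat}
    (hf : Continuous f) (hg : Continuous g) : IsClosed {x | DomK u K (f x) (g x)} := by
  simp only [DomK, Set.ofPred_forall]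
  exact isClosed_iInter fun k => isClosed_iInter fun a =>
    isClosed_le ((continuous_sum_smul_infEnum u a _).comp hf).norm
      (continuous_const.mul ((continuous_sum_smul_infEnum u a _).comp hg).norm)

theorem symmetric_K_domination_closed_general
    {U : Type*} [NormedAddCommGroup U] [NormedSpace ℝ U]
    (u : ℕ → U)
    (K : ℝ) :
    IsClosed {p : InfSubsetNat × InfSubsetNat | DomK u K p.1 p.2 ∨ DomK u K p.2 p.1} ∧
    ∀ V : Set InfSubsetNat,
      (∀ L ∈ V, ∀ M ∈ V, DomK u K L M ∨ DomK u K M L) →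
      ∀ L ∈ closure V, ∀ M ∈ closure V, DomK u K L M ∨ DomK u K M L := by
  have hclosed : IsClosed {p : InfSubsetNat × InfSubsetNat |
      DomK u K p.1 p.2 ∨ DomK u K p.2 p.1} :=
    (isClosed_setOf_domK u K continuous_fst continuous_snd).union
      (isClosed_setOf_domK u K continuous_snd continuous_fst)
  refine ⟨hclosed, fun V hV L hL M hM => ?_⟩
  have hLM : (L, M) ∈ closure (V ×ˢ V) := by
    rw [closure_prod_eq]
    exact ⟨hL, hM⟩
  exact closure_minimal (fun p hp => hV p.1 hp.1 p.2 hp.2) hclosed hLM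

/-- The symmetric relation `≈_K` (`L ≈_K M` iff one of the two
subsequences K-dominates the other) is closed in `[ℕ] × [ℕ]`; in particular it passes
from a set `U` to its closure. -/
theorem symmetric_K_domination_closed
    {U : Type*} [NormedAddCommGroup U] [NormedSpace ℝ U]
    (u : ℕ → U)
    (hbasic : (∀ n, u n ≠ 0) ∧ ∃ Kb : ℝ, 1 ≤ Kb ∧ ∀ m n : ℕ, m ≤ n → ∀ a : ℕ → ℝ,
      ‖∑ i ∈ Finset.range m, a i • u i‖ ≤ Kb * ‖∑ i ∈ Finset.range n, a i • u i‖)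
    (K : ℝ) (hK : 1 ≤ K) :
    IsClosed {p : InfSubsetNat × InfSubsetNat | DomK u K p.1 p.2 ∨ DomK u K p.2 p.1} ∧
    ∀ V : Set InfSubsetNat,
      (∀ L ∈ V, ∀ M ∈ V, DomK u K L M ∨ DomK u K M L) →
      ∀ L ∈ closure V, ∀ M ∈ closure V, DomK u K L M ∨ DomK u K M L :=
  symmetric_K_domination_closed_general u K
end

section
/- Let WO ⊆ 2^{ℕ×ℕ} be the set of (characteristic functions of) well-orderings of ℕ, and for α ∈ WO let |α| be the unique ordinal order-isomorphic to (ℕ, <_α). If B ⊆ WO is analytic, then sup{|α| : α ∈ B} < ω₁. -/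
/-!
Write `B = f '' (ℕ → ℕ)` with `f` continuous and search for a parameter `x` and an
`f x`-descending sequence at once, in the countable tree of pairs (stem of `x`, current term),
where a child must extend the stem far enough to force the next descent for every `x` through
it. A branch would yield a single `x` for which `f x` is ill-founded, so the tree is well-founded,
and its ranks are countable. Conversely, by continuity each descent in a fixed `f x` is forced by
a long enough stem of `x`, so the rank of every `m` in `f x` is at most the rank of the node
`([], m)`.
-/

open MeasureTheory Cardinal Ordinal PiNat Order

universe u

namespace IsWellFounded

variable {α β : Type u} {r : α → α → Prop} {s : β → β → Prop}

theorem rank_le_rank_of_simulation [IsWellFounded α r] [IsWellFounded β s] (P : α → β → Prop)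
    (hP : ∀ ⦃a a' b⦄, P a b → r a' a → ∃ b', P a' b' ∧ s b' b) {a : α} {b : β} (hab : P a b) :
    rank r a ≤ rank s b := by
  induction a using IsWellFounded.induction r generalizing b with
  | ind a ih =>
    rw [rank_eq]
    refine Ordinal.iSup_le fun ⟨a', ha'⟩ => ?_
    obtain ⟨b', hb', hs⟩ := hP hab ha'
    exact succ_le_of_lt ((ih a' ha' hb').trans_lt (rank_lt_of_rel hs))

theorem rank_lt_omega_one [Countable α] (r : α → α → Prop) [IsWellFounded α r] (a : α) :
    rank r a < ω₁ := by
  induction a using IsWellFounded.induction r with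
  | ind a ih =>
    rw [rank_eq]
    exact Ordinal.iSup_lt_omega_one fun b => (isSuccLimit_omega 1).succ_lt (ih b b.2)

end IsWellFounded

theorem Ordinal.type_le_of_forall_typein_lt {α : Type u} {r : α → α → Prop} [IsWellOrder α r]
    {o : Ordinal.{u}} (h : ∀ a, typein r a < o) : type r ≤ o := by
  by_contra! hlt
  obtain ⟨a, rfl⟩ := typein_surj r hlt
  exact (h a).false

namespace WOBoundedness

variable {α β : Type u}

def stem (x : ℕ → α) (n : ℕ) : List α := (List.range n).map x

@[simp]
theorem length_stem (x : ℕ → α) (n : ℕ) : (stem x n).length = n := by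
  simp [stem]

@[simp]
theorem getElem_stem (x : ℕ → α) {n i : ℕ} (hi : i < (stem x n).length) :
    (stem x n)[i] = x i := by
  simp [stem]

theorem stem_prefix_stem (x : ℕ → α) {m n : ℕ} (hmn : m ≤ n) : stem x m <+: stem x n := by
  rw [List.prefix_iff_eq_take, length_stem, stem, stem, ← List.map_take, List.take_range,
    min_eq_left hmn]

theorem stem_eq_stem_iff {x y : ℕ → α} {n : ℕ} : stem y n = stem x n ↔ y ∈ cylinder x n := by
  simp [stem, List.map_inj_left, mem_cylinder_iff]

theorem exists_stem_eq_of_prefix_chain (s : ℕ → List α) (hs : ∀ n, s n <+: s (n + 1))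
    (hlen : ∀ n, n ≤ (s n).length) : ∃ x : ℕ → α, ∀ n, stem x (s n).length = s n := by
  have hmono := Nat.rel_of_forall_rel_succ_of_le (· <+: ·) hs
  refine ⟨fun i => (s (i + 1))[i]'(hlen (i + 1)), fun n => List.ext_getElem (length_stem _ _) ?_⟩
  intro i hi _
  rw [getElem_stem, (hmono (le_max_left (i + 1) n)).getElem,
    (hmono (le_max_right (i + 1) n)).getElem]

variable (r : (ℕ → α) → β → β → Prop)

def ForcingRel (p q : List α × β) : Prop :=
  q.1 <+: p.1 ∧ q.1.length < p.1.length ∧ ∀ x, stem x p.1.length = p.1 → r x p.2 q.2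

theorem wellFounded_forcingRel (hr : ∀ x, WellFounded (r x)) : WellFounded (ForcingRel r) := by
  refine wellFounded_iff_isEmpty_descending_chain.2 ⟨fun ⟨p, hp⟩ => ?_⟩
  have hlen : ∀ n, n ≤ (p n).1.length := by
    intro n
    induction n with
    | zero => exact Nat.zero_le _
    | succ n ih => exact ih.trans_lt (hp n).2.1
  obtain ⟨x, hx⟩ := exists_stem_eq_of_prefix_chain (fun n => (p n).1) (fun n => (hp n).1) hlen
  exact (wellFounded_iff_isEmpty_descending_chain.1 (hr x)).false
    ⟨fun n => (p n).2, fun n => (hp n).2.2 x (hx (n + 1))⟩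

theorem exists_cylinder_subset [TopologicalSpace α] [DiscreteTopology α] {U : Set (ℕ → α)}
    (hU : IsOpen U) {x : ℕ → α} (hx : x ∈ U) : ∃ n, cylinder x n ⊆ U := by
  obtain ⟨_, ⟨y, n, rfl⟩, hxy, hyU⟩ :=
    (isTopologicalBasis_cylinders _).exists_subset_of_mem_open hx hU
  exact ⟨n, mem_cylinder_iff_eq.1 hxy ▸ hyU⟩

theorem rank_le_rank_forcingRel [TopologicalSpace α] [DiscreteTopology α]
    (hr : ∀ b' b, IsOpen {x | r x b' b}) (x : ℕ → α) [IsWellFounded β (r x)]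
    [IsWellFounded (List α × β) (ForcingRel r)] (n : ℕ) (b : β) :
    IsWellFounded.rank (r x) b ≤ IsWellFounded.rank (ForcingRel r) (stem x n, b) := by
  refine IsWellFounded.rank_le_rank_of_simulation (fun b p => ∃ n, p = (stem x n, b))
    ?_ ⟨n, rfl⟩
  rintro c c' _ ⟨k, rfl⟩ hc'
  obtain ⟨N, hN⟩ := exists_cylinder_subset (hr c' c) hc'
  refine ⟨(stem x (max N (k + 1)), c'), ⟨_, rfl⟩, stem_prefix_stem x (by omega), ?_, ?_⟩
  · simp
  · intro y hy
    rw [length_stem, stem_eq_stem_iff] at hy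
    exact hN (cylinder_anti x (le_max_left _ _) hy)

theorem exists_lt_omega_one_type_lt [TopologicalSpace α] [DiscreteTopology α] [Countable α]
    [Countable β] (hr : ∀ b' b, IsOpen {x | r x b' b}) (hwo : ∀ x, IsWellOrder β (r x)) :
    ∃ ξ < ω₁, ∀ x, type (r x) < ξ := by
  have : IsWellFounded _ (ForcingRel r) := ⟨wellFounded_forcingRel r fun x => (hwo x).wf⟩
  refine ⟨succ (⨆ b, succ (IsWellFounded.rank (ForcingRel r) ([], b))), ?_, fun x => ?_⟩
  · exact (isSuccLimit_omega 1).succ_lt <| Ordinal.iSup_lt_omega_one fun b =>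
      (isSuccLimit_omega 1).succ_lt (IsWellFounded.rank_lt_omega_one _ _)
  · refine (type_le_of_forall_typein_lt fun b => ?_).trans_lt (lt_succ _)
    rw [← IsWellFounded.rank_eq_typein]
    exact (rank_le_rank_forcingRel r hr x 0 b).trans_lt <|
      (lt_succ _).trans_le (Ordinal.le_iSup _ b)

end WOBoundedness

open WOBoundedness in
/-- Boundedness for WO: if `B` is an analytic set of codes of
well-orderings of ℕ, then `sup {|α| : α ∈ B} < ω₁`. -/
theorem WO_boundedness
    (B : Set (ℕ × ℕ → Bool))
    (hB : MeasureTheory.AnalyticSet B)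
    (hBWO : ∀ α ∈ B, IsWellOrder ℕ (fun n m => α (n, m) = true)) :
    ∃ ξ : Ordinal, ξ < (Cardinal.aleph 1).ord ∧
      ∀ α ∈ B, ∀ h : IsWellOrder ℕ (fun n m => α (n, m) = true),
        @Ordinal.type ℕ (fun n m => α (n, m) = true) h < ξ := by
  rw [AnalyticSet] at hB
  rw [ord_aleph]
  rcases hB with rfl | ⟨f, hf, rfl⟩
  · exact ⟨0, omega_pos 1, by simp⟩
  have hopen : ∀ n m, IsOpen {x | f x (n, m) = true} := fun n m =>
    (isOpen_discrete {true}).preimage ((continuous_apply (n, m)).comp hf)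
  obtain ⟨ξ, hξ, hlt⟩ := exists_lt_omega_one_type_lt (fun x n m => f x (n, m) = true) hopen
    fun x => hBWO (f x) ⟨x, rfl⟩
  exact ⟨ξ, hξ, fun _ ⟨x, hx⟩ _ => hx ▸ hlt x⟩
end

section
/- Let X be a Polish space, ≤ an F_σ quasi-order on X whose associated equivalence relation ≅ has uncountably many classes. Then either ≤ admits a perfect antichain (hence (X,≤) is not thin), or (X,≤) contains an infinite strictly increasing sequence x_0 < x_1 < x_2 < ⋯. -/
/-!
Call `x` a kernel point if each of its neighbourhoods meets uncountably many `≅`-classes. By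
Lindelöf the other points lie in countably many classes, so the kernel is a nonempty closed,
hence completely metrizable, set in which every nonempty open set meets uncountably many classes.

Inside the kernel, either some nonempty open `W` is such that `≤` contains no nonempty open
rectangle `A × B ⊆ W × W`, or every nonempty open set contains such a rectangle. In the first
case each closed `F n ⊆ ≤` is nowhere dense in `W × W`, and a Mycielski-type Cantor scheme, whose
distinct pieces at level `n + 1` are separated from `F 0 ∪ ⋯ ∪ F n`, gives a continuous
`f : (ℕ → Bool) → X` with `f σ ≰ f τ` for `σ ≠ τ`; its range is closed and uncountable, so by
Cantor–Bendixson it contains a perfect antichain. In the second case nested rectangles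
`Aₙ × Bₙ ⊆ ≤` with `Aₙ₊₁ ⊆ Bₙ` give `x₀ ≤ x₁ ≤ ⋯` with `xₙ ∈ Aₙ`, and `xₙ₊₁` can be taken outside
the class of `xₙ` because `Aₙ₊₁` meets uncountably many classes.
-/

open Set Filter Topology Metric Function

namespace FsigmaQuasiorder

section Kernel

variable {X : Type*} (r : X → X → Prop)

def CountablyManyClasses (S : Set X) : Prop :=
  ∃ D : Set X, D.Countable ∧ ∀ x ∈ S, ∃ d ∈ D, r x d ∧ r d x

variable {r}

theorem CountablyManyClasses.mono {S T : Set X} (hST : S ⊆ T) (hT : CountablyManyClasses r T) :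
    CountablyManyClasses r S :=
  let ⟨D, hD, hcov⟩ := hT
  ⟨D, hD, fun x hx => hcov x (hST hx)⟩

theorem CountablyManyClasses.union {S T : Set X} (hS : CountablyManyClasses r S)
    (hT : CountablyManyClasses r T) : CountablyManyClasses r (S ∪ T) := by
  obtain ⟨D, hD, hcovS⟩ := hS
  obtain ⟨E, hE, hcovT⟩ := hT
  refine ⟨D ∪ E, hD.union hE, ?_⟩
  rintro x (hx | hx)
  · obtain ⟨d, hd, h⟩ := hcovS x hx
    exact ⟨d, .inl hd, h⟩
  · obtain ⟨d, hd, h⟩ := hcovT x hx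
    exact ⟨d, .inr hd, h⟩

theorem CountablyManyClasses.biUnion {ι : Type*} {T : Set ι} (hT : T.Countable) {S : ι → Set X}
    (hS : ∀ i ∈ T, CountablyManyClasses r (S i)) : CountablyManyClasses r (⋃ i ∈ T, S i) := by
  choose! D hD hcov using hS
  refine ⟨⋃ i ∈ T, D i, hT.biUnion hD, ?_⟩
  intro x hx
  obtain ⟨i, hi, hx⟩ := mem_iUnion₂.1 hx
  obtain ⟨d, hd, h⟩ := hcov i hi x hx
  exact ⟨d, mem_biUnion hi hd, h⟩

theorem CountablyManyClasses.image {Y : Type*} {f : Y → X} {S : Set Y}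
    (hS : CountablyManyClasses (fun a b => r (f a) (f b)) S) : CountablyManyClasses r (f '' S) := by
  obtain ⟨D, hD, hcov⟩ := hS
  refine ⟨f '' D, hD.image f, ?_⟩
  rintro _ ⟨x, hx, rfl⟩
  obtain ⟨d, hd, h⟩ := hcov x hx
  exact ⟨f d, mem_image_of_mem f hd, h⟩

variable [TopologicalSpace X]

variable (r) in
/-- The analogue, for classes instead of points, of the perfect kernel in Cantor–Bendixson. -/
def classKernel : Set X :=
  {x | ∀ U ∈ 𝓝 x, ¬ CountablyManyClasses r U}

theorem isClosed_classKernel : IsClosed (classKernel r) := by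
  refine isOpen_compl_iff.1 (isOpen_iff_mem_nhds.2 fun x hx => ?_)
  simp only [classKernel, mem_compl_iff, mem_ofPred_eq, not_forall, not_not] at hx
  obtain ⟨U, hU, hUc⟩ := hx
  obtain ⟨V, hVU, hV, hxV⟩ := mem_nhds_iff.1 hU
  refine mem_of_superset (hV.mem_nhds hxV) fun y hy hyK => ?_
  exact hyK V (hV.mem_nhds hy) (hUc.mono hVU)

theorem countablyManyClasses_compl_classKernel [SecondCountableTopology X] :
    CountablyManyClasses r (classKernel r)ᶜ := by
  have hnhds : ∀ x ∈ (classKernel r)ᶜ, ∃ U ∈ 𝓝 x, CountablyManyClasses r U := by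
    simp [classKernel]
  choose! U hU hUc using hnhds
  obtain ⟨T, hTK, hT, hcover⟩ := TopologicalSpace.countable_cover_nhdsWithin
    fun x hx => mem_nhdsWithin_of_mem_nhds (hU x hx)
  exact (CountablyManyClasses.biUnion hT fun x hx => hUc x (hTK hx)).mono hcover

theorem not_countablyManyClasses_classKernel_inter [SecondCountableTopology X] {U : Set X}
    (hU : IsOpen U) (hne : (classKernel r ∩ U).Nonempty) :
    ¬ CountablyManyClasses r (classKernel r ∩ U) := fun h => by
  obtain ⟨x, hxK, hxU⟩ := hne
  refine hxK U (hU.mem_nhds hxU) ((h.union countablyManyClasses_compl_classKernel).mono ?_)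
  intro y hy
  by_cases hyK : y ∈ classKernel r
  exacts [.inl ⟨hyK, hy⟩, .inr hyK]

theorem classKernel_nonempty [SecondCountableTopology X] (h : ¬ CountablyManyClasses r univ) :
    (classKernel r).Nonempty := by
  by_contra hK
  rw [not_nonempty_iff_eq_empty] at hK
  exact h (by simpa [hK] using countablyManyClasses_compl_classKernel (r := r))

theorem not_countablyManyClasses_of_isOpen_classKernel [SecondCountableTopology X]
    {U : Set (classKernel r)} (hU : IsOpen U) (hne : U.Nonempty) :
    ¬ CountablyManyClasses (fun a b : classKernel r => r a b) U := fun h => by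
  obtain ⟨V, hV, rfl⟩ := isOpen_induced_iff.1 hU
  have hcount := h.image
  rw [Subtype.image_preimage_coe] at hcount
  exact not_countablyManyClasses_classKernel_inter hV
    (by simpa [← Subtype.image_preimage_coe] using hne.image Subtype.val) hcount

end Kernel

section Refinement

variable {Z : Type*} [TopologicalSpace Z] {W : Set Z} {R K : Set (Z × Z)}

/-- For closed `R` this says that `R` is nowhere dense in `W ×ˢ W`. -/
def BoxFree (W : Set Z) (R : Set (Z × Z)) : Prop :=
  ∀ A B : Set Z, IsOpen A → IsOpen B → A.Nonempty → B.Nonempty → A ⊆ W → B ⊆ W → ¬ A ×ˢ B ⊆ R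

theorem BoxFree.mono {R' : Set (Z × Z)} (h : BoxFree W R) (hR : R' ⊆ R) : BoxFree W R' :=
  fun A B hA hB hAne hBne hAW hBW hAB => h A B hA hB hAne hBne hAW hBW (hAB.trans hR)

theorem BoxFree.exists_disjoint_prod (h : BoxFree W K) (hK : IsClosed K) {A B : Set Z}
    (hA : IsOpen A) (hB : IsOpen B) (hAne : A.Nonempty) (hBne : B.Nonempty) (hAW : A ⊆ W)
    (hBW : B ⊆ W) :
    ∃ A' B', IsOpen A' ∧ IsOpen B' ∧ A'.Nonempty ∧ B'.Nonempty ∧ A' ⊆ A ∧ B' ⊆ B ∧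
      Disjoint (A' ×ˢ B') K := by
  obtain ⟨⟨a, b⟩, hab, habK⟩ := not_subset.1 (h A B hA hB hAne hBne hAW hBW)
  obtain ⟨U, V, hU, hV, haU, hbV, hUV⟩ := isOpen_prod_iff.1 hK.isOpen_compl a b habK
  refine ⟨A ∩ U, B ∩ V, hA.inter hU, hB.inter hV, ⟨a, hab.1, haU⟩, ⟨b, hab.2, hbV⟩,
    inter_subset_left, inter_subset_left, ?_⟩
  exact (subset_compl_iff_disjoint_right.1 hUV).mono_left
    (prod_mono inter_subset_right inter_subset_right)

theorem BoxFree.exists_pairwise_disjoint_prod {ι : Type*} [DecidableEq ι] (h : BoxFree W K)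
    (hK : IsClosed K) (s : Finset (ι × ι)) {G : ι → Set Z} (hG : ∀ i, IsOpen (G i) ∧ (G i).Nonempty)
    (hGW : ∀ i, G i ⊆ W) :
    ∃ G' : ι → Set Z, (∀ i, IsOpen (G' i) ∧ (G' i).Nonempty) ∧ (∀ i, G' i ⊆ G i) ∧
      ∀ p ∈ s, p.1 ≠ p.2 → Disjoint (G' p.1 ×ˢ G' p.2) K := by
  induction s using Finset.induction_on with
  | empty => exact ⟨G, hG, fun i => subset_rfl, by simp⟩
  | insert p s _ ih =>
    obtain ⟨G₁, hG₁, hG₁G, hdisj⟩ := ih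
    by_cases hp : p.1 = p.2
    · refine ⟨G₁, hG₁, hG₁G, fun q hq hq12 => ?_⟩
      rcases Finset.mem_insert.1 hq with rfl | hq
      exacts [absurd hp hq12, hdisj q hq hq12]
    obtain ⟨A, B, hA, hB, hAne, hBne, hAG, hBG, hAB⟩ := h.exists_disjoint_prod hK
      (hG₁ p.1).1 (hG₁ p.2).1 (hG₁ p.1).2 (hG₁ p.2).2
      ((hG₁G _).trans (hGW _)) ((hG₁G _).trans (hGW _))
    set G' := update (update G₁ p.1 A) p.2 B
    have hG'G₁ : ∀ i, G' i ⊆ G₁ i := by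
      intro i
      simp only [G', update_apply]
      split_ifs with h2 h1
      exacts [h2 ▸ hBG, h1 ▸ hAG, subset_rfl]
    have hG' : ∀ i, IsOpen (G' i) ∧ (G' i).Nonempty := by
      intro i
      simp only [G', update_apply]
      split_ifs
      exacts [⟨hB, hBne⟩, ⟨hA, hAne⟩, hG₁ i]
    refine ⟨G', hG', fun i => (hG'G₁ i).trans (hG₁G i), fun q hq hq12 => ?_⟩
    rcases Finset.mem_insert.1 hq with rfl | hq
    · simpa [G', update_of_ne hp] using hAB
    · exact (hdisj q hq hq12).mono_left (prod_mono (hG'G₁ _) (hG'G₁ _))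

end Refinement

section CantorScheme

variable {Z : Type*} [PseudoMetricSpace Z] {W : Set Z}

theorem exists_isOpen_closure_subset_ediam_le {U : Set Z} (hU : IsOpen U) (hne : U.Nonempty)
    {ε : ℝ} (hε : 0 < ε) :
    ∃ V : Set Z, (IsOpen V ∧ V.Nonempty) ∧ closure V ⊆ U ∧ ediam V ≤ ENNReal.ofReal ε := by
  obtain ⟨x, hx⟩ := hne
  obtain ⟨δ, hδ, hball⟩ := Metric.isOpen_iff.1 hU x hx
  set ρ := min (δ / 2) (ε / 2)
  have hρ : 0 < ρ := by positivity
  refine ⟨ball x ρ, ⟨isOpen_ball, x, mem_ball_self hρ⟩, ?_, ?_⟩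
  · refine closure_ball_subset_closedBall.trans ((closedBall_subset_ball ?_).trans hball)
    linarith [min_le_left (δ / 2) (ε / 2)]
  · refine ediam_le_of_forall_dist_le fun y hy z hz => ?_
    calc dist y z ≤ dist y x + dist z x := dist_triangle_right y z x
      _ ≤ ε := by linarith [mem_ball.1 hy, mem_ball.1 hz, min_le_right (δ / 2) (ε / 2)]

theorem BoxFree.exists_small_pairwise_disjoint_prod {ι : Type*} [DecidableEq ι]
    {K : Set (Z × Z)} (h : BoxFree W K) (hK : IsClosed K) (S : Finset ι) {ε : ℝ} (hε : 0 < ε) {G : ι → Set Z}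
    (hG : ∀ i, IsOpen (G i) ∧ (G i).Nonempty) (hGW : ∀ i, G i ⊆ W) :
    ∃ G' : ι → Set Z, (∀ i, IsOpen (G' i) ∧ (G' i).Nonempty) ∧ (∀ i, closure (G' i) ⊆ G i) ∧
      (∀ i, ediam (G' i) ≤ ENNReal.ofReal ε) ∧
      ∀ i ∈ S, ∀ j ∈ S, i ≠ j → Disjoint (G' i ×ˢ G' j) K := by
  obtain ⟨G₁, hG₁, hG₁G, hdisj⟩ := h.exists_pairwise_disjoint_prod hK S.offDiag hG hGW
  choose G' hG' hG'G₁ hdiam using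
    fun i => exists_isOpen_closure_subset_ediam_le (hG₁ i).1 (hG₁ i).2 hε
  have hsub : ∀ i, G' i ⊆ G₁ i := fun i => subset_closure.trans (hG'G₁ i)
  refine ⟨G', hG', fun i => (hG'G₁ i).trans (hG₁G i), hdiam, fun i hi j hj hij => ?_⟩
  exact (hdisj (i, j) (Finset.mem_offDiag.2 ⟨hi, hj, hij⟩) hij).mono_left
    (prod_mono (hsub i) (hsub j))

theorem exists_continuous_forall_mem_res [CompleteSpace Z] (V : ℕ → List Bool → Set Z)
    (hne : ∀ n l, (V n l).Nonempty) (hcl : ∀ n b l, closure (V (n + 1) (b :: l)) ⊆ V n l)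
    (hdiam : ∀ n l, ediam (V (n + 1) l) ≤ ENNReal.ofReal (1 / (n + 1))) :
    ∃ f : (ℕ → Bool) → Z, Continuous f ∧ ∀ σ n, f σ ∈ V n (PiNat.res σ n) := by
  set A : List Bool → Set Z := fun l => V l.length l
  have hanti : CantorScheme.ClosureAntitone A := fun l b => hcl l.length b l
  have hvan : CantorScheme.VanishingDiam A := by
    intro σ
    rw [← tendsto_add_atTop_iff_nat 1]
    refine tendsto_of_tendsto_of_tendsto_of_le_of_le
      (h := fun n : ℕ => ENNReal.ofReal (1 / (n + 1))) tendsto_const_nhds ?_ (fun _ => bot_le)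
      (fun n => ?_)
    · simpa using ENNReal.tendsto_ofReal tendsto_one_div_add_atTop_nhds_zero_nat
    · simpa [A, PiNat.res_length] using hdiam n (PiNat.res σ (n + 1))
  have hdom := hanti.map_of_vanishingDiam hvan fun l => hne _ l
  refine ⟨fun σ => (CantorScheme.inducedMap A).2 ⟨σ, hdom ▸ mem_univ σ⟩,
    hvan.map_continuous.comp (by fun_prop), fun σ n => ?_⟩
  have hmem := CantorScheme.map_mem ⟨σ, hdom ▸ mem_univ σ⟩ n
  change _ ∈ V (PiNat.res σ n).length _ at hmem
  rwa [PiNat.res_length] at hmem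

theorem BoxFree.exists_separated_scheme {K : ℕ → Set (Z × Z)} (hK : ∀ n, IsClosed (K n))
    (h : ∀ n, BoxFree W (K n)) (hW : IsOpen W) (hWne : W.Nonempty) :
    ∃ V : ℕ → List Bool → Set Z, (∀ n l, (V n l).Nonempty) ∧
      (∀ n b l, closure (V (n + 1) (b :: l)) ⊆ V n l) ∧
      (∀ n l, ediam (V (n + 1) l) ≤ ENNReal.ofReal (1 / (n + 1))) ∧
      ∀ n l l', l.length = n + 1 → l'.length = n + 1 → l ≠ l' →
        Disjoint (V (n + 1) l ×ˢ V (n + 1) l') (K n) := by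
  classical
  choose! next hnext hnext_cl hnext_diam hnext_disj using fun n (G : List Bool → Set Z) =>
    (h n).exists_small_pairwise_disjoint_prod (hK n) (List.finite_length_eq Bool (n + 1)).toFinset
      (ε := 1 / (n + 1)) Nat.one_div_pos_of_nat (G := G)
  let V : ℕ → List Bool → Set Z :=
    fun n => Nat.rec (fun _ => W) (fun n Vn => next n fun l => Vn l.tail) n
  have hV : ∀ n, (∀ l, IsOpen (V n l) ∧ (V n l).Nonempty) ∧ ∀ l, V n l ⊆ W := by
    intro n
    induction n with
    | zero => exact ⟨fun _ => ⟨hW, hWne⟩, fun _ => subset_rfl⟩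
    | succ n ih =>
      have hcl := hnext_cl n _ (fun l => ih.1 l.tail) (fun l => ih.2 l.tail)
      exact ⟨hnext n _ (fun l => ih.1 l.tail) (fun l => ih.2 l.tail),
        fun l => subset_closure.trans ((hcl l).trans (ih.2 _))⟩
  have hVo n (l : List Bool) := (hV n).1 l.tail
  have hVW n (l : List Bool) := (hV n).2 l.tail
  refine ⟨V, fun n l => ((hV n).1 l).2, fun n b l => hnext_cl n _ (hVo n) (hVW n) (b :: l),
    fun n => hnext_diam n _ (hVo n) (hVW n), fun n l l' hl hl' hll' => ?_⟩
  exact hnext_disj n _ (hVo n) (hVW n) l (by simpa using hl) l' (by simpa using hl') hll'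

theorem BoxFree.exists_continuous_antichain [CompleteSpace Z] {r : Z → Z → Prop}
    {F : ℕ → Set (Z × Z)} (hF : ∀ n, IsClosed (F n)) (hr : {p : Z × Z | r p.1 p.2} = ⋃ n, F n)
    (hW : IsOpen W) (hWne : W.Nonempty) (h : BoxFree W {p | r p.1 p.2}) :
    ∃ f : (ℕ → Bool) → Z, Continuous f ∧ ∀ σ τ, σ ≠ τ → ¬ r (f σ) (f τ) := by
  set K : ℕ → Set (Z × Z) := fun n => ⋃ m ∈ Iic n, F m
  have hKr : ∀ n, K n ⊆ {p | r p.1 p.2} :=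
    fun n => hr ▸ iUnion₂_subset fun m _ => subset_iUnion F m
  obtain ⟨V, hne, hcl, hdiam, hdisj⟩ := BoxFree.exists_separated_scheme
    (fun n => (finite_Iic n).isClosed_biUnion fun m _ => hF m) (fun n => h.mono (hKr n)) hW hWne
  obtain ⟨f, hf, hfV⟩ := exists_continuous_forall_mem_res V hne hcl hdiam
  refine ⟨f, hf, fun σ τ hστ hrστ => ?_⟩
  obtain ⟨k, hk⟩ : ∃ k, σ k ≠ τ k := not_forall.1 (mt funext hστ)
  obtain ⟨m, hm⟩ := mem_iUnion.1 (hr ▸ hrστ : (f σ, f τ) ∈ ⋃ n, F n)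
  have hres : PiNat.res σ (max m k + 1) ≠ PiNat.res τ (max m k + 1) :=
    fun h => hk (PiNat.res_eq_res.1 h (by omega))
  refine disjoint_left.1 (hdisj _ _ _ (PiNat.res_length σ _) (PiNat.res_length τ _) hres)
    (mk_mem_prod (hfV σ _) (hfV τ _)) ?_
  exact mem_biUnion (mem_Iic.2 (le_max_left m k)) hm

end CantorScheme

section Dichotomy

variable {Z : Type*} {r : Z → Z → Prop}

theorem exists_inequivalent_mem_with_open_above [TopologicalSpace Z]
    (hunc : ∀ U : Set Z, IsOpen U → U.Nonempty → ¬ CountablyManyClasses r U)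
    (hbox : ∀ W : Set Z, IsOpen W → W.Nonempty → ¬ BoxFree W {p | r p.1 p.2})
    {W : Set Z} (hW : IsOpen W) (hWne : W.Nonempty) (x : Z) :
    ∃ x' ∈ W, ¬ (r x' x ∧ r x x') ∧ ∃ B : Set Z, IsOpen B ∧ B.Nonempty ∧ ∀ y ∈ B, r x' y := by
  have hAB := hbox W hW hWne
  simp only [BoxFree, not_forall, not_not] at hAB
  obtain ⟨A, B, hA, hB, hAne, hBne, hAW, -, hAB⟩ := hAB
  obtain ⟨x', hx'A, hx'x⟩ : ∃ x' ∈ A, ¬ (r x' x ∧ r x x') := by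
    by_contra! h
    exact hunc A hA hAne ⟨{x}, countable_singleton x, fun y hy => ⟨x, rfl, h y hy⟩⟩
  exact ⟨x', hAW hx'A, hx'x, B, hB, hBne, fun y hy => hAB (mk_mem_prod hx'A hy)⟩

theorem exists_strictly_increasing_seq [TopologicalSpace Z] [Nonempty Z]
    (hunc : ∀ U : Set Z, IsOpen U → U.Nonempty → ¬ CountablyManyClasses r U)
    (hbox : ∀ W : Set Z, IsOpen W → W.Nonempty → ¬ BoxFree W {p | r p.1 p.2}) :
    ∃ x : ℕ → Z, ∀ n, r (x n) (x (n + 1)) ∧ ¬ r (x (n + 1)) (x n) := by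
  let State := {s : Z × Set Z // IsOpen s.2 ∧ s.2.Nonempty ∧ ∀ y ∈ s.2, r s.1 y}
  have step : ∀ s : State, ∃ t : State, r s.1.1 t.1.1 ∧ ¬ r t.1.1 s.1.1 := by
    rintro ⟨⟨x, B⟩, hB, hBne, hxB⟩
    obtain ⟨x', hx'B, hx'x, B', hB', hB'ne, hx'B'⟩ :=
      exists_inequivalent_mem_with_open_above hunc hbox hB hBne x
    exact ⟨⟨(x', B'), hB', hB'ne, hx'B'⟩, hxB x' hx'B, fun h => hx'x ⟨h, hxB x' hx'B⟩⟩
  obtain ⟨x₀⟩ := ‹Nonempty Z›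
  obtain ⟨x, -, -, B, hB, hBne, hxB⟩ :=
    exists_inequivalent_mem_with_open_above hunc hbox isOpen_univ univ_nonempty x₀
  choose next hnext using step
  exact ⟨fun n => (next^[n] ⟨(x, B), hB, hBne, hxB⟩).1.1,
    fun n => by simpa only [iterate_succ_apply'] using hnext _⟩

theorem exists_continuous_antichain_or_strictly_increasing [PseudoMetricSpace Z] [CompleteSpace Z]
    [Nonempty Z] {F : ℕ → Set (Z × Z)} (hF : ∀ n, IsClosed (F n))
    (hr : {p : Z × Z | r p.1 p.2} = ⋃ n, F n)
    (hunc : ∀ U : Set Z, IsOpen U → U.Nonempty → ¬ CountablyManyClasses r U) :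
    (∃ f : (ℕ → Bool) → Z, Continuous f ∧ ∀ σ τ, σ ≠ τ → ¬ r (f σ) (f τ)) ∨
      ∃ x : ℕ → Z, ∀ n, r (x n) (x (n + 1)) ∧ ¬ r (x (n + 1)) (x n) := by
  by_cases h : ∃ W : Set Z, IsOpen W ∧ W.Nonempty ∧ BoxFree W {p | r p.1 p.2}
  · obtain ⟨W, hW, hWne, hWbox⟩ := h
    exact .inl (hWbox.exists_continuous_antichain hF hr hW hWne)
  · push Not at h
    exact .inr (exists_strictly_increasing_seq hunc h)

theorem exists_perfect_antichain_of_continuous [TopologicalSpace Z] [T2Space Z]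
    [SecondCountableTopology Z] (hrefl : ∀ x, r x x) {f : (ℕ → Bool) → Z} (hf : Continuous f)
    (hanti : ∀ σ τ, σ ≠ τ → ¬ r (f σ) (f τ)) :
    ∃ P : Set Z, Perfect P ∧ P.Nonempty ∧ ∀ a ∈ P, ∀ b ∈ P, a ≠ b → ¬ r a b ∧ ¬ r b a := by
  have hinj : Injective f := fun σ τ h => by_contra fun hστ => hanti σ τ hστ (h ▸ hrefl _)
  have : Uncountable (ℕ → Bool) :=
    Cardinal.aleph0_lt_mk_iff.1 (by simpa using Cardinal.aleph0_lt_continuum)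
  have hrange : ¬ (range f).Countable :=
    fun h => not_countable_univ (by simpa using h.preimage hinj)
  obtain ⟨P, hP, hPne, hPf⟩ :=
    exists_perfect_nonempty_of_isClosed_of_not_countable (isCompact_range hf).isClosed hrange
  refine ⟨P, hP, hPne, ?_⟩
  rintro a ha b hb hab
  obtain ⟨σ, rfl⟩ := hPf ha
  obtain ⟨τ, rfl⟩ := hPf hb
  have hστ : σ ≠ τ := fun h => hab (congrArg f h)
  exact ⟨hanti σ τ hστ, hanti τ σ hστ.symm⟩

end Dichotomy

end FsigmaQuasiorder

open FsigmaQuasiorder in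
theorem fsigma_quasiorder_dichotomy_general
    {X : Type*} [TopologicalSpace X] [PolishSpace X]
    (le : X → X → Prop)
    (hrefl : ∀ x, le x x)
    (hFσ : ∃ F : ℕ → Set (X × X), (∀ n, IsClosed (F n)) ∧
      {p : X × X | le p.1 p.2} = ⋃ n, F n)
    (huncount : ¬ ∃ D : Set X, D.Countable ∧ ∀ x : X, ∃ d ∈ D, le x d ∧ le d x) :
    (∃ P : Set X, Perfect P ∧ P.Nonempty ∧
      ∀ a ∈ P, ∀ b ∈ P, a ≠ b → ¬ le a b ∧ ¬ le b a) ∨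
    (∃ x : ℕ → X, ∀ n, le (x n) (x (n + 1)) ∧ ¬ le (x (n + 1)) (x n)) := by
  let := TopologicalSpace.upgradeIsCompletelyMetrizable X
  obtain ⟨F, hF, hle⟩ := hFσ
  have hK : (classKernel le).Nonempty :=
    classKernel_nonempty (by simpa [CountablyManyClasses] using huncount)
  have : Nonempty (classKernel le) := hK.to_subtype
  have : CompleteSpace (classKernel le) := IsClosed.completeSpace_coe (hs := isClosed_classKernel)
  rcases exists_continuous_antichain_or_strictly_increasing
    (r := fun a b : classKernel le => le a b) (F := fun n => Prod.map (↑) (↑) ⁻¹' F n)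
    (fun n => (hF n).preimage (by fun_prop))
    (by rw [← preimage_iUnion, ← hle]; rfl)
    (fun _ => not_countablyManyClasses_of_isOpen_classKernel) with ⟨f, hf, hanti⟩ | ⟨x, hx⟩
  · exact .inl (exists_perfect_antichain_of_continuous hrefl (continuous_subtype_val.comp hf) hanti)
  · exact .inr ⟨fun n => x n, hx⟩

/-- An F_σ quasi-order on a Polish space whose associated equivalence
relation has uncountably many classes either admits a perfect antichain (it is not
thin) or contains an infinite strictly increasing sequence. -/
theorem fsigma_quasiorder_dichotomy
    {X : Type*} [TopologicalSpace X] [PolishSpace X]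
    (le : X → X → Prop)
    (hrefl : ∀ x, le x x)
    (htrans : ∀ x y z, le x y → le y z → le x z)
    (hFσ : ∃ F : ℕ → Set (X × X), (∀ n, IsClosed (F n)) ∧
      {p : X × X | le p.1 p.2} = ⋃ n, F n)
    (huncount : ¬ ∃ D : Set X, D.Countable ∧ ∀ x : X, ∃ d ∈ D, le x d ∧ le d x) :
    (∃ P : Set X, Perfect P ∧ P.Nonempty ∧
      ∀ a ∈ P, ∀ b ∈ P, a ≠ b → ¬ le a b ∧ ¬ le b a) ∨
    (∃ x : ℕ → X, ∀ n, le (x n) (x (n + 1)) ∧ ¬ le (x (n + 1)) (x n)) :=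
  fsigma_quasiorder_dichotomy_general le hrefl hFσ huncount
end
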